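/- arXiv:2011.12682 — 8 statements merged into one kernel-verified Lean document; each statement's English description precedes it below -/
import Mathlib

section
/- Let n ≥ 1, let a, b, Y, v ∈ ℝⁿ with b_i ≥ 0 and Y_i ≥ 0 for all i, and let K be a real n×n matrix such that |v_i| ≤ ∑_{j=1}^n K_{ij} Y_j for every i. Define N = diag(a) − Kᵀ diag(b) K. Then ∑_{i=1}^n a_i Y_i² − ∑_{i=1}^n b_i v_i² ≥ Yᵀ N Y. In particular, if N is positive semidefinite, then ∑_{i=1}^n a_i Y_i² − ∑_{i=1}^n b_i v_i² ≥ 0. -/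
/-! `Yᵀ N Y = ∑ aᵢ Yᵢ² − ∑ bᵢ (K Y)ᵢ²`, and `|vᵢ| ≤ (K Y)ᵢ` with `bᵢ ≥ 0` gives
`bᵢ vᵢ² ≤ bᵢ (K Y)ᵢ²` term by term. -/

open Matrix

section QuadraticForm

variable {ι κ R : Type*} [Fintype ι] [Fintype κ] [CommRing R]

theorem Matrix.dotProduct_diagonal_mulVec_self [DecidableEq ι] (a x : ι → R) :
    x ⬝ᵥ (diagonal a *ᵥ x) = ∑ i, a i * x i ^ 2 :=
  Finset.sum_congr rfl fun i _ => by rw [mulVec_diagonal]; ring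

theorem Matrix.dotProduct_transpose_mul_diagonal_mul_mulVec_self [DecidableEq κ] (b : κ → R)
    (K : Matrix κ ι R) (x : ι → R) :
    x ⬝ᵥ ((Kᵀ * diagonal b * K) *ᵥ x) = ∑ k, b k * (K *ᵥ x) k ^ 2 := by
  rw [← mulVec_mulVec, ← mulVec_mulVec, dotProduct_mulVec, vecMul_transpose,
    dotProduct_diagonal_mulVec_self]

theorem Matrix.dotProduct_diagonal_sub_transpose_mul_diagonal_mul_mulVec_self [DecidableEq ι]
    [DecidableEq κ] (a : ι → R) (b : κ → R) (K : Matrix κ ι R) (x : ι → R) :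
    x ⬝ᵥ ((diagonal a - Kᵀ * diagonal b * K) *ᵥ x)
      = ∑ i, a i * x i ^ 2 - ∑ k, b k * (K *ᵥ x) k ^ 2 := by
  rw [sub_mulVec, dotProduct_sub, dotProduct_diagonal_mulVec_self,
    dotProduct_transpose_mul_diagonal_mul_mulVec_self]

end QuadraticForm

theorem Finset.sum_mul_sq_le_sum_mul_sq_of_abs_le {ι R : Type*} [Ring R] [LinearOrder R]
    [IsStrictOrderedRing R] (s : Finset ι) {b v w : ι → R} (hb : ∀ i ∈ s, 0 ≤ b i)
    (hvw : ∀ i ∈ s, |v i| ≤ w i) : ∑ i ∈ s, b i * v i ^ 2 ≤ ∑ i ∈ s, b i * w i ^ 2 :=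
  Finset.sum_le_sum fun i hi =>
    mul_le_mul_of_nonneg_left (sq_le_sq' (neg_le_of_abs_le (hvw i hi)) (le_of_abs_le (hvw i hi)))
      (hb i hi)

theorem stmt_1_general (n : ℕ) (a b Y v : Fin n → ℝ)
    (hb : ∀ i, 0 ≤ b i)
    (K : Matrix (Fin n) (Fin n) ℝ)
    (hv : ∀ i, |v i| ≤ ∑ j, K i j * Y j) :
    (∑ i, a i * (Y i) ^ 2 - ∑ i, b i * (v i) ^ 2
      ≥ Y ⬝ᵥ ((Matrix.diagonal a - Kᵀ * Matrix.diagonal b * K) *ᵥ Y)) ∧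
    ((Matrix.diagonal a - Kᵀ * Matrix.diagonal b * K).PosSemidef →
      ∑ i, a i * (Y i) ^ 2 - ∑ i, b i * (v i) ^ 2 ≥ 0) := by
  have bound : Y ⬝ᵥ ((diagonal a - Kᵀ * diagonal b * K) *ᵥ Y)
      ≤ ∑ i, a i * Y i ^ 2 - ∑ i, b i * v i ^ 2 := by
    rw [dotProduct_diagonal_sub_transpose_mul_diagonal_mul_mulVec_self]
    exact sub_le_sub_left
      (Finset.univ.sum_mul_sq_le_sum_mul_sq_of_abs_le (fun i _ => hb i) (fun i _ => hv i)) _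
  refine ⟨bound, fun hN => ?_⟩
  have hnonneg := hN.dotProduct_mulVec_nonneg Y
  rw [star_trivial] at hnonneg
  exact hnonneg.trans bound

/-- the algebraic boundary-term estimate: if `|v i| ≤ ∑ j, K i j * Y j`
with `b, Y` nonnegative, then `∑ a_i Y_i² − ∑ b_i v_i² ≥ Yᵀ N Y` where
`N = diag(a) − Kᵀ diag(b) K`; in particular if `N` is positive semidefinite the
left-hand side is nonnegative. -/
theorem stmt_1 (n : ℕ) (hn : 1 ≤ n) (a b Y v : Fin n → ℝ)
    (hb : ∀ i, 0 ≤ b i) (hY : ∀ i, 0 ≤ Y i)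
    (K : Matrix (Fin n) (Fin n) ℝ)
    (hv : ∀ i, |v i| ≤ ∑ j, K i j * Y j) :
    (∑ i, a i * (Y i) ^ 2 - ∑ i, b i * (v i) ^ 2
      ≥ Y ⬝ᵥ ((Matrix.diagonal a - Kᵀ * Matrix.diagonal b * K) *ᵥ Y)) ∧
    ((Matrix.diagonal a - Kᵀ * Matrix.diagonal b * K).PosSemidef →
      ∑ i, a i * (Y i) ^ 2 - ∑ i, b i * (v i) ^ 2 ≥ 0) :=
  stmt_1_general n a b Y v hb K hv
end

section
/- Let n ≥ 1, L > 0. Let D, J : [0,L] → ℝⁿ be continuous with D_i(x) > 0 and J_i(x) > 0 for all i and x, let S : [0,L] → Sym_n(ℝ) be a continuous symmetric-matrix-valued map, and let λ_m > 0 be such that ξᵀ D(x) S(x) D(x) ξ ≥ λ_m |ξ|² for every x ∈ [0,L] and ξ ∈ ℝⁿ. Let g : L²((0,L);ℝⁿ) → L²((0,L);ℝⁿ) satisfy g(0) = 0 and ‖g(u) − g(v)‖_{L²} ≤ C_g ‖u − v‖_{L²} for all u, v, with some constant C_g ≥ 0. Then for every u ∈ L²((0,L);ℝⁿ), ∫₀ᴸ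 u(x)ᵀ S(x) u(x) dx + 2∫₀ᴸ u(x)ᵀ J(x)² g(u)(x) dx ≥ (λ_m − 2 C_g · max_{i,x}(D_i(x)J_i(x)²) · max_{i,x} D_i(x)) · ∫₀ᴸ |D(x)⁻¹ u(x)|² dx, where D(x)⁻¹u(x) has components u_i(x)/D_i(x) and J(x)² is the diagonal matrix with entries J_i(x)². -/
/-!
With `ξ = D⁻¹u` the local term is `∫ uᵀSu = ∫ ξᵀ(DSD)ξ ≥ λ_m ∫ |ξ|²`. In the nonlocal term write
`uᵢJᵢ²gᵢ(u) = (DᵢJᵢ²) ξᵢ gᵢ(u)`: Cauchy–Schwarz, `‖g(u)‖ ≤ C_g ‖u‖` (Lipschitz bound against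
`g(0) = 0`) and `‖u‖ ≤ max D · ‖ξ‖` give `|∫ uᵀJ²g(u)| ≤ C_g · max(DJ²) · max D · ‖ξ‖²`.
Continuity on the compact interval `[0, L]` makes all these maxima, and `max |D⁻¹|`, finite.
-/

open MeasureTheory Set Matrix

theorem exists_abs_le_of_continuousOn {X ι : Type*} [TopologicalSpace X] [Fintype ι]
    {s : Set X} (hs : IsCompact s) {f : X → ι → ℝ} (hf : ∀ i, ContinuousOn (fun x => f x i) s) :
    ∃ C, ∀ x ∈ s, ∀ i, |f x i| ≤ C := by
  obtain ⟨C, hC⟩ := hs.exists_bound_of_continuousOn (continuousOn_pi.2 hf)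
  exact ⟨C, fun x hx i => (norm_le_pi_norm (f x) i).trans (hC x hx)⟩

theorem le_ciSup_of_continuousOn {X ι : Type*} [TopologicalSpace X] [Fintype ι]
    {s : Set X} (hs : IsCompact s) {f : X → ι → ℝ} (hf : ∀ i, ContinuousOn (fun x => f x i) s)
    {x : X} (hx : x ∈ s) (i : ι) : f x i ≤ ⨆ p : ι × s, f p.2 p.1 := by
  obtain ⟨C, hC⟩ := exists_abs_le_of_continuousOn hs hf
  refine le_ciSup (f := fun p : ι × s => f p.2 p.1) ⟨C, ?_⟩ (i, ⟨x, hx⟩)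
  rintro _ ⟨p, rfl⟩
  exact (le_abs_self _).trans (hC _ p.2.2 p.1)

theorem sum_sq_le_mul_sum_sq_of_abs_le {ι : Type*} [Fintype ι] {a b : ι → ℝ} {K : ℝ}
    (h : ∀ i, |a i| ≤ K * |b i|) : ∑ i, a i ^ 2 ≤ K ^ 2 * ∑ i, b i ^ 2 := by
  rw [Finset.mul_sum]
  refine Finset.sum_le_sum fun i _ => ?_
  calc a i ^ 2 = |a i| ^ 2 := (sq_abs _).symm
    _ ≤ (K * |b i|) ^ 2 := pow_le_pow_left₀ (abs_nonneg _) (h i) 2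
    _ = K ^ 2 * b i ^ 2 := by rw [mul_pow, sq_abs]

theorem dotProduct_diagonal_mul_mul_diagonal_mulVec {R ι : Type*} [CommSemiring R] [Fintype ι]
    [DecidableEq ι] (d v : ι → R) (S : Matrix ι ι R) :
    v ⬝ᵥ ((diagonal d * S * diagonal d) *ᵥ v) = (d * v) ⬝ᵥ (S *ᵥ (d * v)) := by
  have hd : ∀ w, diagonal d *ᵥ w = d * w := fun w => funext (mulVec_diagonal d w)
  rw [← mulVec_mulVec, ← mulVec_mulVec, hd, hd]
  simp only [dotProduct, Pi.mul_apply]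
  exact Finset.sum_congr rfl fun i _ => by ring

section Integrals

variable {α ι : Type*} [MeasurableSpace α] [Fintype ι] {μ : Measure α}

theorem integrable_sum_sq_div {u D : α → ι → ℝ} {K : ℝ}
    (hξ : ∀ i, AEMeasurable (fun x => u x i / D x i) μ)
    (hu2 : Integrable (fun x => ∑ i, u x i ^ 2) μ) (hK : ∀ᵐ x ∂μ, ∀ i, |(D x i)⁻¹| ≤ K) :
    Integrable (fun x => ∑ i, (u x i / D x i) ^ 2) μ := by
  refine (hu2.const_mul (K ^ 2)).mono'
    (Finset.aemeasurable_fun_sum _ fun i _ => (hξ i).pow_const 2).aestronglyMeasurable ?_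
  filter_upwards [hK] with x hx
  rw [Real.norm_of_nonneg (Finset.sum_nonneg fun i _ => sq_nonneg _)]
  refine sum_sq_le_mul_sum_sq_of_abs_le fun i => ?_
  rw [div_eq_inv_mul, abs_mul]
  exact mul_le_mul_of_nonneg_right (hx i) (abs_nonneg _)

theorem integral_mul_le_sqrt_mul_sqrt {F G : α → ℝ} (hF0 : 0 ≤ᵐ[μ] F) (hG0 : 0 ≤ᵐ[μ] G)
    (hF : MemLp F 2 μ) (hG : MemLp G 2 μ) :
    ∫ x, F x * G x ∂μ ≤ √(∫ x, F x ^ 2 ∂μ) * √(∫ x, G x ^ 2 ∂μ) := by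
  have h := integral_mul_le_Lp_mul_Lq_of_nonneg Real.HolderConjugate.two_two hF0 hG0
    (by simpa using hF) (by simpa using hG)
  simp only [Real.rpow_two] at h
  rwa [Real.sqrt_eq_rpow, Real.sqrt_eq_rpow]

theorem memLp_two_sqrt_sum_sq {f : α → ι → ℝ} (hf : ∀ i, AEMeasurable (fun x => f x i) μ)
    (hf2 : Integrable (fun x => ∑ i, f x i ^ 2) μ) : MemLp (fun x => √(∑ i, f x i ^ 2)) 2 μ := by
  refine (memLp_two_iff_integrable_sq ?_).2 ?_
  · exact (Finset.aemeasurable_fun_sum _ fun i _ => (hf i).pow_const 2).sqrt.aestronglyMeasurable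
  · simpa only [Real.sq_sqrt (Finset.sum_nonneg fun i _ => sq_nonneg (f _ i))] using hf2

theorem memLp_two_of_integrable_sum_sq {f : α → ι → ℝ} (hf : ∀ i, AEMeasurable (fun x => f x i) μ)
    (hf2 : Integrable (fun x => ∑ i, f x i ^ 2) μ) (i : ι) : MemLp (fun x => f x i) 2 μ := by
  refine (memLp_two_iff_integrable_sq (hf i).aestronglyMeasurable).2 ?_
  refine hf2.mono' ((hf i).pow_const 2).aestronglyMeasurable (ae_of_all _ fun x => ?_)
  rw [Real.norm_of_nonneg (sq_nonneg _)]
  exact Finset.single_le_sum (f := fun j => f x j ^ 2) (fun j _ => sq_nonneg _)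
    (Finset.mem_univ i)

theorem abs_integral_sum_mul_mul_le {w f g : α → ι → ℝ} {M : ℝ} (hM : 0 ≤ M)
    (hw : ∀ᵐ x ∂μ, ∀ i, |w x i| ≤ M)
    (hf : ∀ i, AEMeasurable (fun x => f x i) μ) (hg : ∀ i, AEMeasurable (fun x => g x i) μ)
    (hf2 : Integrable (fun x => ∑ i, f x i ^ 2) μ) (hg2 : Integrable (fun x => ∑ i, g x i ^ 2) μ) :
    |∫ x, ∑ i, w x i * f x i * g x i ∂μ|
      ≤ M * (√(∫ x, ∑ i, f x i ^ 2 ∂μ) * √(∫ x, ∑ i, g x i ^ 2 ∂μ)) := by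
  set F := fun x => √(∑ i, f x i ^ 2)
  set G := fun x => √(∑ i, g x i ^ 2)
  have hFL2 : MemLp F 2 μ := memLp_two_sqrt_sum_sq hf hf2
  have hGL2 : MemLp G 2 μ := memLp_two_sqrt_sum_sq hg hg2
  have hF2 : ∀ x, F x ^ 2 = ∑ i, f x i ^ 2 := fun x =>
    Real.sq_sqrt (Finset.sum_nonneg fun i _ => sq_nonneg _)
  have hG2 : ∀ x, G x ^ 2 = ∑ i, g x i ^ 2 := fun x =>
    Real.sq_sqrt (Finset.sum_nonneg fun i _ => sq_nonneg _)
  have hpoint : ∀ᵐ x ∂μ, ‖∑ i, w x i * f x i * g x i‖ ≤ M * (F x * G x) := by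
    filter_upwards [hw] with x hx
    calc ‖∑ i, w x i * f x i * g x i‖ ≤ ∑ i, |w x i| * (|f x i| * |g x i|) := by
          simpa only [Real.norm_eq_abs, abs_mul, mul_assoc] using
            Finset.abs_sum_le_sum_abs (fun i => w x i * f x i * g x i) Finset.univ
      _ ≤ ∑ i, M * (|f x i| * |g x i|) :=
          Finset.sum_le_sum fun i _ => mul_le_mul_of_nonneg_right (hx i)
            (mul_nonneg (abs_nonneg _) (abs_nonneg _))
      _ ≤ M * (F x * G x) := by
          rw [← Finset.mul_sum]
          refine mul_le_mul_of_nonneg_left ?_ hM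
          simpa only [sq_abs] using
            Real.sum_mul_le_sqrt_mul_sqrt Finset.univ (fun i => |f x i|) (fun i => |g x i|)
  calc |∫ x, ∑ i, w x i * f x i * g x i ∂μ|
      ≤ ∫ x, M * (F x * G x) ∂μ :=
        norm_integral_le_of_norm_le ((hFL2.integrable_mul hGL2).const_mul M) hpoint
    _ = M * ∫ x, F x * G x ∂μ := integral_const_mul M _
    _ ≤ M * (√(∫ x, F x ^ 2 ∂μ) * √(∫ x, G x ^ 2 ∂μ)) :=
        mul_le_mul_of_nonneg_left (integral_mul_le_sqrt_mul_sqrt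
          (ae_of_all _ fun x => Real.sqrt_nonneg _) (ae_of_all _ fun x => Real.sqrt_nonneg _)
          hFL2 hGL2) hM
    _ = _ := by simp only [hF2, hG2]

theorem integrable_dotProduct_mulVec {u : α → ι → ℝ} {S : α → Matrix ι ι ℝ} {C : ℝ}
    (hu : ∀ i, AEMeasurable (fun x => u x i) μ) (hu2 : Integrable (fun x => ∑ i, u x i ^ 2) μ)
    (hS : ∀ i j, AEMeasurable (fun x => S x i j) μ) (hSC : ∀ᵐ x ∂μ, ∀ i j, |S x i j| ≤ C) :
    Integrable (fun x => u x ⬝ᵥ (S x *ᵥ u x)) μ := by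
  have huL2 := memLp_two_of_integrable_sum_sq hu hu2
  simp only [dotProduct, mulVec, Finset.mul_sum]
  refine integrable_finsetSum _ fun i _ => integrable_finsetSum _ fun j _ => ?_
  have hbdd : ∀ᵐ x ∂μ, ‖S x i j‖ ≤ C := by
    filter_upwards [hSC] with x hx using hx i j
  refine (((huL2 i).integrable_mul (huL2 j)).bdd_mul (hS i j).aestronglyMeasurable hbdd).congr
    (ae_of_all _ fun x => ?_)
  simp only [Pi.mul_apply]
  ring

theorem mul_integral_sum_sq_div_le_integral_dotProduct_mulVec [DecidableEq ι]
    {u D : α → ι → ℝ} {S : α → Matrix ι ι ℝ} {lam : ℝ} (hD : ∀ᵐ x ∂μ, ∀ i, D x i ≠ 0)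
    (hcoerc : ∀ᵐ x ∂μ, ∀ ξ : ι → ℝ,
      lam * ∑ i, ξ i ^ 2 ≤ ξ ⬝ᵥ ((diagonal (D x) * S x * diagonal (D x)) *ᵥ ξ))
    (hξ2 : Integrable (fun x => ∑ i, (u x i / D x i) ^ 2) μ)
    (hS : Integrable (fun x => u x ⬝ᵥ (S x *ᵥ u x)) μ) :
    lam * ∫ x, ∑ i, (u x i / D x i) ^ 2 ∂μ ≤ ∫ x, u x ⬝ᵥ (S x *ᵥ u x) ∂μ := by
  rw [← integral_const_mul]
  refine integral_mono_ae (hξ2.const_mul lam) hS ?_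
  filter_upwards [hD, hcoerc] with x hDx hx
  have hu : D x * (fun i => u x i / D x i) = u x := funext fun i => mul_div_cancel₀ _ (hDx i)
  simpa only [dotProduct_diagonal_mul_mul_diagonal_mulVec, hu] using hx fun i => u x i / D x i

theorem neg_mul_integral_le_integral_sum_mul_sq_mul {u D J v : α → ι → ℝ} {Cg M₁ M₂ : ℝ}
    (hCg : 0 ≤ Cg) (hM₁ : 0 ≤ M₁) (hM₂ : 0 ≤ M₂)
    (hD : ∀ᵐ x ∂μ, ∀ i, 0 < D x i ∧ D x i ≤ M₂)
    (hDJ : ∀ᵐ x ∂μ, ∀ i, D x i * J x i ^ 2 ≤ M₁)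
    (hξ : ∀ i, AEMeasurable (fun x => u x i / D x i) μ) (hv : ∀ i, AEMeasurable (fun x => v x i) μ)
    (hu2 : Integrable (fun x => ∑ i, u x i ^ 2) μ)
    (hξ2 : Integrable (fun x => ∑ i, (u x i / D x i) ^ 2) μ)
    (hv2 : Integrable (fun x => ∑ i, v x i ^ 2) μ)
    (hlip : √(∫ x, ∑ i, v x i ^ 2 ∂μ) ≤ Cg * √(∫ x, ∑ i, u x i ^ 2 ∂μ)) :
    -(Cg * M₁ * M₂ * ∫ x, ∑ i, (u x i / D x i) ^ 2 ∂μ)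
      ≤ ∫ x, ∑ i, u x i * J x i ^ 2 * v x i ∂μ := by
  set A := ∫ x, ∑ i, (u x i / D x i) ^ 2 ∂μ
  have hA : 0 ≤ A := integral_nonneg fun x => Finset.sum_nonneg fun i _ => sq_nonneg _
  have hweight : ∀ᵐ x ∂μ, ∀ i, |D x i * J x i ^ 2| ≤ M₁ := by
    filter_upwards [hD, hDJ] with x hDx hDJx i
    rw [abs_of_nonneg (mul_nonneg (hDx i).1.le (sq_nonneg _))]
    exact hDJx i
  have hrewrite : (fun x => ∑ i, u x i * J x i ^ 2 * v x i) =ᵐ[μ]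
      fun x => ∑ i, D x i * J x i ^ 2 * (u x i / D x i) * v x i := by
    filter_upwards [hD] with x hDx
    refine Finset.sum_congr rfl fun i _ => ?_
    rw [show D x i * J x i ^ 2 * (u x i / D x i) = D x i * (u x i / D x i) * J x i ^ 2 by ring,
      mul_div_cancel₀ _ (hDx i).1.ne']
  have hu : ∫ x, ∑ i, u x i ^ 2 ∂μ ≤ M₂ ^ 2 * A := by
    rw [← integral_const_mul]
    refine integral_mono_ae hu2 (hξ2.const_mul _) ?_
    filter_upwards [hD] with x hDx
    refine sum_sq_le_mul_sum_sq_of_abs_le fun i => ?_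
    calc |u x i| = D x i * |u x i / D x i| := by
          rw [abs_div, abs_of_pos (hDx i).1, mul_div_cancel₀ _ (hDx i).1.ne']
      _ ≤ M₂ * |u x i / D x i| := mul_le_mul_of_nonneg_right (hDx i).2 (abs_nonneg _)
  have hvA : √(∫ x, ∑ i, v x i ^ 2 ∂μ) ≤ Cg * (M₂ * √A) := by
    refine hlip.trans (mul_le_mul_of_nonneg_left ?_ hCg)
    calc √(∫ x, ∑ i, u x i ^ 2 ∂μ) ≤ √(M₂ ^ 2 * A) := Real.sqrt_le_sqrt hu
      _ = M₂ * √A := by rw [Real.sqrt_mul (sq_nonneg _), Real.sqrt_sq hM₂]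
  have hT := abs_integral_sum_mul_mul_le hM₁ hweight hξ hv hξ2 hv2
  rw [integral_congr_ae hrewrite]
  calc -(Cg * M₁ * M₂ * A) = -(M₁ * (√A * (Cg * (M₂ * √A)))) := by
        linear_combination (Cg * M₁ * M₂) * Real.mul_self_sqrt hA
    _ ≤ -(M₁ * (√A * √(∫ x, ∑ i, v x i ^ 2 ∂μ))) :=
        neg_le_neg (mul_le_mul_of_nonneg_left
          (mul_le_mul_of_nonneg_left hvA (Real.sqrt_nonneg _)) hM₁)
    _ ≤ _ := neg_le_of_abs_le hT

end Integrals

theorem stmt_2_general (n : ℕ) (L : ℝ)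
    (D J : ℝ → Fin n → ℝ)
    (hDcont : ∀ i, ContinuousOn (fun x => D x i) (Icc 0 L))
    (hJcont : ∀ i, ContinuousOn (fun x => J x i) (Icc 0 L))
    (hDpos : ∀ i, ∀ x ∈ Icc (0:ℝ) L, 0 < D x i)
    (S : ℝ → Matrix (Fin n) (Fin n) ℝ)
    (hScont : ContinuousOn S (Icc 0 L))
    (lam : ℝ)
    (hcoerc : ∀ x ∈ Icc (0:ℝ) L, ∀ ξ : Fin n → ℝ,
      lam * ∑ i, ξ i ^ 2 ≤
        ξ ⬝ᵥ ((Matrix.diagonal (D x) * S x * Matrix.diagonal (D x)) *ᵥ ξ))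
    (g : (ℝ → Fin n → ℝ) → ℝ → Fin n → ℝ)
    (Cg : ℝ) (hCg : 0 ≤ Cg)
    (hg0 : ∀ x, g (fun _ _ => 0) x = fun _ => 0)
    (hgmeas : ∀ u : ℝ → Fin n → ℝ, (∀ i, Measurable fun x => u x i) →
      ∀ i, Measurable fun x => g u x i)
    (hgL2 : ∀ u : ℝ → Fin n → ℝ, (∀ i, Measurable fun x => u x i) →
      IntegrableOn (fun x => ∑ i, (u x i) ^ 2) (Ioo 0 L) →
      IntegrableOn (fun x => ∑ i, (g u x i) ^ 2) (Ioo 0 L))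
    (hglip : ∀ u v : ℝ → Fin n → ℝ,
      (∀ i, Measurable fun x => u x i) → (∀ i, Measurable fun x => v x i) →
      IntegrableOn (fun x => ∑ i, (u x i) ^ 2) (Ioo 0 L) →
      IntegrableOn (fun x => ∑ i, (v x i) ^ 2) (Ioo 0 L) →
      Real.sqrt (∫ x in Ioo 0 L, ∑ i, (g u x i - g v x i) ^ 2)
        ≤ Cg * Real.sqrt (∫ x in Ioo 0 L, ∑ i, (u x i - v x i) ^ 2))
    (u : ℝ → Fin n → ℝ)
    (humeas : ∀ i, Measurable fun x => u x i)
    (hu2 : IntegrableOn (fun x => ∑ i, (u x i) ^ 2) (Ioo 0 L)) :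
    (lam - 2 * Cg * (⨆ p : Fin n × Icc (0:ℝ) L, D (p.2 : ℝ) p.1 * (J (p.2 : ℝ) p.1) ^ 2)
          * (⨆ p : Fin n × Icc (0:ℝ) L, D (p.2 : ℝ) p.1))
        * ∫ x in Ioo 0 L, ∑ i, (u x i / D x i) ^ 2
      ≤ (∫ x in Ioo 0 L, u x ⬝ᵥ (S x *ᵥ u x))
        + 2 * ∫ x in Ioo 0 L, ∑ i, u x i * (J x i) ^ 2 * g u x i := by
  set μ := volume.restrict (Ioo (0:ℝ) L)
  have hIcc : ∀ᵐ x ∂μ, x ∈ Icc (0:ℝ) L :=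
    ae_restrict_of_forall_mem measurableSet_Ioo fun _ hx => Ioo_subset_Icc_self hx
  have hmeas : ∀ {f : ℝ → ℝ}, ContinuousOn f (Icc 0 L) → AEMeasurable f μ := fun hf =>
    (hf.mono Ioo_subset_Icc_self).aemeasurable measurableSet_Ioo
  have hSij : ∀ i j, ContinuousOn (fun x => S x i j) (Icc 0 L) := fun i j =>
    (continuous_id.matrix_elem i j).comp_continuousOn hScont
  obtain ⟨K, hK⟩ := exists_abs_le_of_continuousOn isCompact_Icc fun i =>
    (hDcont i).inv₀ fun x hx => (hDpos i x hx).ne'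
  obtain ⟨C, hC⟩ := exists_abs_le_of_continuousOn (f := fun x (p : Fin n × Fin n) => S x p.1 p.2)
    isCompact_Icc fun p => hSij p.1 p.2
  have hξ : ∀ i, AEMeasurable (fun x => u x i / D x i) μ := fun i =>
    (humeas i).aemeasurable.div (hmeas (hDcont i))
  have hξ2 := integrable_sum_sq_div hξ hu2 (hIcc.mono fun x hx => hK x hx)
  have hquad := mul_integral_sum_sq_div_le_integral_dotProduct_mulVec
    (hIcc.mono fun x hx i => (hDpos i x hx).ne') (hIcc.mono hcoerc) hξ2
    (integrable_dotProduct_mulVec (fun i => (humeas i).aemeasurable) hu2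
      (fun i j => hmeas (hSij i j)) (hIcc.mono fun x hx i j => hC x hx (i, j)))
  have hnonlocal := neg_mul_integral_le_integral_sum_mul_sq_mul hCg
    (Real.iSup_nonneg fun (p : Fin n × Icc (0:ℝ) L) =>
      mul_nonneg (hDpos p.1 p.2 p.2.2).le (sq_nonneg _))
    (Real.iSup_nonneg fun (p : Fin n × Icc (0:ℝ) L) => (hDpos p.1 p.2 p.2.2).le)
    (hIcc.mono fun x hx i => ⟨hDpos i x hx, le_ciSup_of_continuousOn isCompact_Icc hDcont hx i⟩)
    (hIcc.mono fun x hx i => le_ciSup_of_continuousOn isCompact_Icc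
      (fun i => (hDcont i).mul ((hJcont i).pow 2)) hx i)
    hξ (fun i => (hgmeas u humeas i).aemeasurable) hu2 hξ2 (hgL2 u humeas hu2)
    (by simpa only [hg0, sub_zero] using
      hglip u (fun _ _ => 0) humeas (fun _ => measurable_const) hu2 (by simp))
  linear_combination hquad + 2 * hnonlocal

/-- the interior coercivity estimate (lower bound on `I₃`):
if `ξᵀ D(x) S(x) D(x) ξ ≥ λ_m |ξ|²` and `g` is `L²`-Lipschitz with constant `C_g`
and `g(0) = 0`, then
`∫ uᵀSu + 2∫ uᵀJ²g(u) ≥ (λ_m − 2 C_g max(D_iJ_i²) max(D_i)) ∫ |D⁻¹u|²`. -/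
theorem stmt_2 (n : ℕ) (hn : 1 ≤ n) (L : ℝ) (hL : 0 < L)
    (D J : ℝ → Fin n → ℝ)
    (hDcont : ∀ i, ContinuousOn (fun x => D x i) (Icc 0 L))
    (hJcont : ∀ i, ContinuousOn (fun x => J x i) (Icc 0 L))
    (hDpos : ∀ i, ∀ x ∈ Icc (0:ℝ) L, 0 < D x i)
    (hJpos : ∀ i, ∀ x ∈ Icc (0:ℝ) L, 0 < J x i)
    (S : ℝ → Matrix (Fin n) (Fin n) ℝ)
    (hScont : ContinuousOn S (Icc 0 L))
    (hSsymm : ∀ x ∈ Icc (0:ℝ) L, (S x).IsSymm)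
    (lam : ℝ) (hlam : 0 < lam)
    (hcoerc : ∀ x ∈ Icc (0:ℝ) L, ∀ ξ : Fin n → ℝ,
      lam * ∑ i, ξ i ^ 2 ≤
        ξ ⬝ᵥ ((Matrix.diagonal (D x) * S x * Matrix.diagonal (D x)) *ᵥ ξ))
    (g : (ℝ → Fin n → ℝ) → ℝ → Fin n → ℝ)
    (Cg : ℝ) (hCg : 0 ≤ Cg)
    (hg0 : ∀ x, g (fun _ _ => 0) x = fun _ => 0)
    (hgmeas : ∀ u : ℝ → Fin n → ℝ, (∀ i, Measurable fun x => u x i) →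
      ∀ i, Measurable fun x => g u x i)
    (hgL2 : ∀ u : ℝ → Fin n → ℝ, (∀ i, Measurable fun x => u x i) →
      IntegrableOn (fun x => ∑ i, (u x i) ^ 2) (Ioo 0 L) →
      IntegrableOn (fun x => ∑ i, (g u x i) ^ 2) (Ioo 0 L))
    (hglip : ∀ u v : ℝ → Fin n → ℝ,
      (∀ i, Measurable fun x => u x i) → (∀ i, Measurable fun x => v x i) →
      IntegrableOn (fun x => ∑ i, (u x i) ^ 2) (Ioo 0 L) →
      IntegrableOn (fun x => ∑ i, (v x i) ^ 2) (Ioo 0 L) →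
      Real.sqrt (∫ x in Ioo 0 L, ∑ i, (g u x i - g v x i) ^ 2)
        ≤ Cg * Real.sqrt (∫ x in Ioo 0 L, ∑ i, (u x i - v x i) ^ 2))
    (u : ℝ → Fin n → ℝ)
    (humeas : ∀ i, Measurable fun x => u x i)
    (hu2 : IntegrableOn (fun x => ∑ i, (u x i) ^ 2) (Ioo 0 L)) :
    (lam - 2 * Cg * (⨆ p : Fin n × Icc (0:ℝ) L, D (p.2 : ℝ) p.1 * (J (p.2 : ℝ) p.1) ^ 2)
          * (⨆ p : Fin n × Icc (0:ℝ) L, D (p.2 : ℝ) p.1))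
        * ∫ x in Ioo 0 L, ∑ i, (u x i / D x i) ^ 2
      ≤ (∫ x in Ioo 0 L, u x ⬝ᵥ (S x *ᵥ u x))
        + 2 * ∫ x in Ioo 0 L, ∑ i, u x i * (J x i) ^ 2 * g u x i :=
  stmt_2_general n L D J hDcont hJcont hDpos S hScont lam hcoerc g Cg hCg hg0 hgmeas hgL2 hglip u
    humeas hu2
end

section
/- Let n ≥ 1, L > 0, T > 0. Let Λ : [0,L] → ℝⁿ and J : [0,L] → ℝⁿ be continuously differentiable with J_i(x) > 0 for all i, x. Let u : [0,T] × [0,L] → ℝⁿ and w : [0,T] × [0,L] → ℝⁿ be continuous, with u continuously differentiable, satisfying ∂_t u_i(t,x) + Λ_i(x) ∂_x u_i(t,x) + w_i(t,x) = 0 for all (t,x) ∈ [0,T] × [0,L] and all i. Define V(t) = ∫₀ᴸ ∑_i J_i(x)² u_i(t,x)² dx. Then V is differentiable on [0,T] and V'(t) = −( ∑_i J_i(L)²Λ_i(L)u_i(t,L)² − ∑_i J_i(0)²Λ_i(0)u_i(t,0)² ) + ∫₀ᴸ ∑_i (J_i²Λ_i)'(x) u_i(t,x)² dx − 2∫₀ᴸ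 ∑_i J_i(x)² u_i(t,x) w_i(t,x) dx for every t ∈ [0,T]. -/
open MeasureTheory Set

/-- differentiation of the basic quadratic Lyapunov function along
classical solutions of `∂ₜu + Λ(x)∂ₓu + w = 0` plus integration by parts:
`V'(t) = −[∑ J_i²Λ_i u_i²]₀ᴸ + ∫ ∑ (J_i²Λ_i)' u_i² − 2∫ ∑ J_i² u_i w_i`. -/
theorem stmt_4 (n : ℕ) (hn : 1 ≤ n) (L T : ℝ) (hL : 0 < L) (hT : 0 < T)
    (Λ Λ' J J' : ℝ → Fin n → ℝ)
    (hΛ : ∀ i, ∀ x ∈ Icc (0:ℝ) L,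
      HasDerivWithinAt (fun y => Λ y i) (Λ' x i) (Icc 0 L) x)
    (hΛ'cont : ∀ i, ContinuousOn (fun x => Λ' x i) (Icc 0 L))
    (hJ : ∀ i, ∀ x ∈ Icc (0:ℝ) L,
      HasDerivWithinAt (fun y => J y i) (J' x i) (Icc 0 L) x)
    (hJ'cont : ∀ i, ContinuousOn (fun x => J' x i) (Icc 0 L))
    (hJpos : ∀ i, ∀ x ∈ Icc (0:ℝ) L, 0 < J x i)
    (u ut ux w : ℝ → ℝ → Fin n → ℝ)
    (hucont : ∀ i, ContinuousOn (fun p : ℝ × ℝ => u p.1 p.2 i) (Icc 0 T ×ˢ Icc 0 L))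
    (hutcont : ∀ i, ContinuousOn (fun p : ℝ × ℝ => ut p.1 p.2 i) (Icc 0 T ×ˢ Icc 0 L))
    (huxcont : ∀ i, ContinuousOn (fun p : ℝ × ℝ => ux p.1 p.2 i) (Icc 0 T ×ˢ Icc 0 L))
    (hwcont : ∀ i, ContinuousOn (fun p : ℝ × ℝ => w p.1 p.2 i) (Icc 0 T ×ˢ Icc 0 L))
    (hut : ∀ i, ∀ t ∈ Icc (0:ℝ) T, ∀ x ∈ Icc (0:ℝ) L,
      HasDerivWithinAt (fun s => u s x i) (ut t x i) (Icc 0 T) t)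
    (hux : ∀ i, ∀ t ∈ Icc (0:ℝ) T, ∀ x ∈ Icc (0:ℝ) L,
      HasDerivWithinAt (fun y => u t y i) (ux t x i) (Icc 0 L) x)
    (hpde : ∀ i, ∀ t ∈ Icc (0:ℝ) T, ∀ x ∈ Icc (0:ℝ) L,
      ut t x i + Λ x i * ux t x i + w t x i = 0) :
    ∀ t ∈ Icc (0:ℝ) T,
      HasDerivWithinAt
        (fun s => ∫ x in Ioo 0 L, ∑ i, (J x i) ^ 2 * (u s x i) ^ 2)
        (-((∑ i, (J L i) ^ 2 * Λ L i * (u t L i) ^ 2)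
            - ∑ i, (J 0 i) ^ 2 * Λ 0 i * (u t 0 i) ^ 2)
          + (∫ x in Ioo 0 L,
              ∑ i, (2 * J x i * J' x i * Λ x i + (J x i) ^ 2 * Λ' x i) * (u t x i) ^ 2)
          - 2 * ∫ x in Ioo 0 L, ∑ i, (J x i) ^ 2 * u t x i * w t x i)
        (Icc 0 T) t := by
  intro t ht
  -- basic continuity facts
  have hJc : ∀ i, ContinuousOn (fun x => J x i) (Icc 0 L) :=
    fun i x hx => (hJ i x hx).continuousWithinAt
  have hΛc : ∀ i, ContinuousOn (fun x => Λ x i) (Icc 0 L) :=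
    fun i x hx => (hΛ i x hx).continuousWithinAt
  -- slices
  have sliceX : ∀ (f : ℝ → ℝ → Fin n → ℝ),
      (∀ i, ContinuousOn (fun p : ℝ × ℝ => f p.1 p.2 i) (Icc 0 T ×ˢ Icc 0 L)) →
      ∀ s ∈ Icc (0:ℝ) T, ∀ i, ContinuousOn (fun x => f s x i) (Icc 0 L) := by
    intro f hf s hs i
    exact ContinuousOn.comp (t := Icc 0 T ×ˢ Icc 0 L) (f := fun x : ℝ => (s, x)) (hf i)
      (Continuous.continuousOn (by fun_prop)) (fun x hx => ⟨hs, hx⟩)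
  -- the time derivative of the integrand
  set g : ℝ → ℝ → ℝ := fun s x => ∑ i, 2 * (J x i) ^ 2 * u s x i * ut s x i with hgdef
  set F : ℝ → ℝ → ℝ := fun s x => ∑ i, (J x i) ^ 2 * (u s x i) ^ 2 with hFdef
  have hgc : ContinuousOn (fun p : ℝ × ℝ => g p.1 p.2) (Icc 0 T ×ˢ Icc 0 L) := by
    apply continuousOn_finset_sum
    intro i _
    have hJp : ContinuousOn (fun p : ℝ × ℝ => J p.2 i) (Icc 0 T ×ˢ Icc 0 L) :=
      (hJc i).comp continuous_snd.continuousOn (fun p hp => hp.2)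
    exact ((continuousOn_const.mul (hJp.pow 2)).mul (hucont i)).mul (hutcont i)
  have hgT : ∀ x ∈ Icc (0:ℝ) L, ContinuousOn (fun r => g r x) (Icc 0 T) := by
    intro x hx
    exact ContinuousOn.comp (t := Icc 0 T ×ˢ Icc 0 L) (f := fun r : ℝ => (r, x)) hgc
      (Continuous.continuousOn (by fun_prop)) (fun r hr => ⟨hr, hx⟩)
  have hgX : ∀ s ∈ Icc (0:ℝ) T, ContinuousOn (fun x => g s x) (Icc 0 L) := by
    intro s hs
    exact ContinuousOn.comp (t := Icc 0 T ×ˢ Icc 0 L) (f := fun x : ℝ => (s, x)) hgc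
      (Continuous.continuousOn (by fun_prop)) (fun x hx => ⟨hs, hx⟩)
  have hFX : ∀ s ∈ Icc (0:ℝ) T, ContinuousOn (fun x => F s x) (Icc 0 L) := by
    intro s hs
    apply continuousOn_finset_sum
    intro i _
    exact ((hJc i).pow 2).mul ((sliceX u hucont s hs i).pow 2)
  have hFint : ∀ s ∈ Icc (0:ℝ) T, IntegrableOn (fun x => F s x) (Ioo 0 L) :=
    fun s hs => ((hFX s hs).integrableOn_compact isCompact_Icc).mono_set Ioo_subset_Icc_self
  -- time derivative of F
  have hFderiv : ∀ x ∈ Icc (0:ℝ) L, ∀ s ∈ Icc (0:ℝ) T,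
      HasDerivWithinAt (fun r => F r x) (g s x) (Icc 0 T) s := by
    intro x hx s hs
    refine HasDerivWithinAt.fun_sum fun i _ => ?_
    have h2 := ((hut i s hs x hx).fun_pow 2).const_mul ((J x i) ^ 2)
    convert h2 using 1
    · rfl
    ring
  -- FTC in time
  have hFTCt : ∀ s ∈ Icc (0:ℝ) T, ∀ x ∈ Icc (0:ℝ) L,
      ∫ r in (0:ℝ)..s, g r x = F s x - F 0 x := by
    intro s hs x hx
    apply intervalIntegral.integral_eq_sub_of_hasDeriv_right_of_le hs.1
    · exact fun r hr =>
        ((hFderiv x hx r ⟨hr.1, hr.2.trans hs.2⟩).continuousWithinAt).mono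
          (Icc_subset_Icc le_rfl hs.2)
    · intro r hr
      exact (hFderiv x hx r ⟨hr.1.le, (hr.2.trans_le hs.2).le⟩).mono_of_mem_nhdsWithin
        (Icc_mem_nhdsGT_of_mem ⟨hr.1.le, hr.2.trans_le hs.2⟩)
    · apply ContinuousOn.intervalIntegrable
      have : ContinuousOn (fun r => g r x) (uIcc 0 s) := by
        rw [uIcc_of_le hs.1]
        exact (hgT x hx).mono (Icc_subset_Icc le_rfl hs.2)
      exact this
  -- D is the candidate derivative (before integration by parts)
  set D : ℝ → ℝ := fun r => ∫ x in Ioo 0 L, g r x with hDdef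
  -- bound for dominated convergence
  obtain ⟨M, hM⟩ := (isCompact_Icc.prod isCompact_Icc).exists_bound_of_continuousOn hgc
  have hDc : ContinuousOn D (Icc 0 T) := by
    intro r₀ hr₀
    apply continuousWithinAt_of_dominated (bound := fun _ => M)
    · filter_upwards [self_mem_nhdsWithin] with r hr
      exact ((hgX r hr).aestronglyMeasurable measurableSet_Icc).mono_measure
        (Measure.restrict_mono Ioo_subset_Icc_self le_rfl)
    · filter_upwards [self_mem_nhdsWithin] with r hr
      filter_upwards [ae_restrict_mem measurableSet_Ioo] with x hx
      exact hM (r, x) ⟨hr, Ioo_subset_Icc_self hx⟩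
    · rw [integrable_const_iff]
      right
      exact ⟨by simp [measure_Ioo_lt_top]⟩
    · filter_upwards [ae_restrict_mem measurableSet_Ioo] with x hx
      exact hgT x (Ioo_subset_Icc_self hx) r₀ hr₀
  have hDint : IntervalIntegrable D volume 0 t := by
    apply ContinuousOn.intervalIntegrable
    have : ContinuousOn D (uIcc 0 t) := by
      rw [uIcc_of_le ht.1]
      exact hDc.mono (Icc_subset_Icc le_rfl ht.2)
    exact this
  haveI : Fact (t ∈ Icc (0:ℝ) T) := ⟨ht⟩
  have hprim : HasDerivWithinAt (fun s => ∫ r in (0:ℝ)..s, D r) (D t) (Icc 0 T) t :=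
    intervalIntegral.integral_hasDerivWithinAt_right hDint
      ⟨Icc 0 T, self_mem_nhdsWithin, hDc.aestronglyMeasurable measurableSet_Icc⟩
      (hDc t ht)
  -- Fubini + FTC in time give the key identity
  have hkey : ∀ s ∈ Icc (0:ℝ) T,
      (∫ x in Ioo 0 L, F s x) = (∫ x in Ioo 0 L, F 0 x) + ∫ r in (0:ℝ)..s, D r := by
    intro s hs
    have h0T : (0:ℝ) ∈ Icc (0:ℝ) T := ⟨le_rfl, hT.le⟩
    have h1 : (∫ x in Ioo 0 L, F s x) - (∫ x in Ioo 0 L, F 0 x)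
        = ∫ x in Ioo 0 L, (F s x - F 0 x) :=
      (integral_sub (hFint s hs) (hFint 0 h0T)).symm
    have h2 : (∫ x in Ioo 0 L, (F s x - F 0 x))
        = ∫ x in Ioo 0 L, ∫ r in (0:ℝ)..s, g r x :=
      setIntegral_congr_fun measurableSet_Ioo
        (fun x hx => (hFTCt s hs x (Ioo_subset_Icc_self hx)).symm)
    have hswap : ContinuousOn (fun p : ℝ × ℝ => g p.2 p.1) (Icc 0 L ×ˢ Icc 0 T) :=
      ContinuousOn.comp (t := Icc 0 T ×ˢ Icc 0 L) (f := fun p : ℝ × ℝ => (p.2, p.1)) hgc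
        (Continuous.continuousOn (by fun_prop)) (fun p hp => ⟨hp.2, hp.1⟩)
    have hint : IntegrableOn (fun p : ℝ × ℝ => g p.2 p.1) (Ioo 0 L ×ˢ Ioc 0 s) :=
      (hswap.integrableOn_compact (isCompact_Icc.prod isCompact_Icc)).mono_set
        (prod_mono Ioo_subset_Icc_self (fun r hr => ⟨hr.1.le, hr.2.trans hs.2⟩))
    have h3 : (∫ x in Ioo 0 L, ∫ r in (0:ℝ)..s, g r x) = ∫ r in (0:ℝ)..s, D r := by
      have hs1 := hs.1
      calc (∫ x in Ioo 0 L, ∫ r in (0:ℝ)..s, g r x)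
          = ∫ x in Ioo 0 L, ∫ r in Ioc 0 s, g r x := by
            simp only [intervalIntegral.integral_of_le hs1]
        _ = ∫ r in Ioc 0 s, ∫ x in Ioo 0 L, g r x := by
            apply integral_integral_swap
            rw [Measure.prod_restrict, ← Measure.volume_eq_prod]
            exact hint
        _ = ∫ r in (0:ℝ)..s, D r := by
            rw [intervalIntegral.integral_of_le hs1]
    linarith [h1, h2, h3]
  -- derivative of V
  have hVder : HasDerivWithinAt (fun s => ∫ x in Ioo 0 L, F s x) (D t) (Icc 0 T) t := by
    have h := hprim.const_add (∫ x in Ioo 0 L, F 0 x)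
    exact h.congr (fun s hs => hkey s hs) (hkey t ht)
  -- integration by parts in space
  set G : ℝ → ℝ := fun x => ∑ i, (J x i) ^ 2 * Λ x i * (u t x i) ^ 2 with hGdef
  set GD : ℝ → ℝ := fun x =>
    ∑ i, ((2 * J x i * J' x i * Λ x i + (J x i) ^ 2 * Λ' x i) * (u t x i) ^ 2
      + 2 * (J x i) ^ 2 * Λ x i * u t x i * ux t x i) with hGDdef
  have hGderiv : ∀ x ∈ Icc (0:ℝ) L, HasDerivWithinAt G (GD x) (Icc 0 L) x := by
    intro x hx
    refine HasDerivWithinAt.fun_sum fun i _ => ?_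
    have h2 := ((hJ i x hx).fun_pow 2).fun_mul (hΛ i x hx)
    have h4 := h2.fun_mul ((hux i t ht x hx).fun_pow 2)
    convert h4 using 1
    · rfl
    ring
  have hGDcont : ContinuousOn GD (Icc 0 L) := by
    apply continuousOn_finset_sum
    intro i _
    have hu_t : ContinuousOn (fun x => u t x i) (Icc 0 L) := sliceX u hucont t ht i
    have hux_t : ContinuousOn (fun x => ux t x i) (Icc 0 L) := sliceX ux huxcont t ht i
    exact ((((continuousOn_const.mul (hJc i)).mul (hJ'cont i)).mul (hΛc i)).add
        (((hJc i).pow 2).mul (hΛ'cont i))).mul (hu_t.pow 2) |>.add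
      ((((continuousOn_const.mul ((hJc i).pow 2)).mul (hΛc i)).mul hu_t).mul hux_t)
  have hGD_int : IntegrableOn GD (Ioo 0 L) :=
    (hGDcont.integrableOn_compact isCompact_Icc).mono_set Ioo_subset_Icc_self
  have hIBP : ∫ x in Ioo 0 L, GD x = G L - G 0 := by
    have h := intervalIntegral.integral_eq_sub_of_hasDeriv_right_of_le hL.le
      (fun x hx => (hGderiv x hx).continuousWithinAt)
      (fun x hx => (hGderiv x (Ioo_subset_Icc_self hx)).mono_of_mem_nhdsWithin
        (Icc_mem_nhdsGT_of_mem ⟨hx.1.le, hx.2⟩))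
      (by
        apply ContinuousOn.intervalIntegrable
        have : ContinuousOn GD (uIcc 0 L) := by rw [uIcc_of_le hL.le]; exact hGDcont
        exact this)
    rw [intervalIntegral.integral_of_le hL.le, integral_Ioc_eq_integral_Ioo] at h
    exact h
  -- the other two integrands
  set A : ℝ → ℝ := fun x =>
    ∑ i, (2 * J x i * J' x i * Λ x i + (J x i) ^ 2 * Λ' x i) * (u t x i) ^ 2 with hAdef
  set Wf : ℝ → ℝ := fun x => ∑ i, (J x i) ^ 2 * u t x i * w t x i with hWdef
  have hAcont : ContinuousOn A (Icc 0 L) := by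
    apply continuousOn_finset_sum
    intro i _
    exact ((((continuousOn_const.mul (hJc i)).mul (hJ'cont i)).mul (hΛc i)).add
        (((hJc i).pow 2).mul (hΛ'cont i))).mul ((sliceX u hucont t ht i).pow 2)
  have hWcont : ContinuousOn Wf (Icc 0 L) := by
    apply continuousOn_finset_sum
    intro i _
    exact (((hJc i).pow 2).mul (sliceX u hucont t ht i)).mul (sliceX w hwcont t ht i)
  have hA_int : IntegrableOn A (Ioo 0 L) :=
    (hAcont.integrableOn_compact isCompact_Icc).mono_set Ioo_subset_Icc_self
  have hW_int : IntegrableOn Wf (Ioo 0 L) :=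
    (hWcont.integrableOn_compact isCompact_Icc).mono_set Ioo_subset_Icc_self
  -- pointwise identity from the PDE
  have hpoint : ∀ x ∈ Ioo (0:ℝ) L, g t x = -(GD x) + A x - 2 * Wf x := by
    intro x hx
    have hx' := Ioo_subset_Icc_self hx
    have hsplit : -(GD x) + A x - 2 * Wf x
        = ∑ i, (-(((2 * J x i * J' x i * Λ x i + (J x i) ^ 2 * Λ' x i) * (u t x i) ^ 2
            + 2 * (J x i) ^ 2 * Λ x i * u t x i * ux t x i))
          + (2 * J x i * J' x i * Λ x i + (J x i) ^ 2 * Λ' x i) * (u t x i) ^ 2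
          - 2 * ((J x i) ^ 2 * u t x i * w t x i)) := by
      rw [hGDdef, hAdef, hWdef, Finset.mul_sum, ← Finset.sum_neg_distrib,
        ← Finset.sum_add_distrib, ← Finset.sum_sub_distrib]
    rw [hsplit, hgdef]
    refine Finset.sum_congr rfl fun i _ => ?_
    have hpde' : ut t x i = -(Λ x i * ux t x i + w t x i) := by
      have := hpde i t ht x hx'
      linarith
    rw [hpde']
    ring
  -- identify D t
  have hGD_neg_int : IntegrableOn (fun x => -(GD x)) (Ioo 0 L) := hGD_int.neg
  have hsum_int : IntegrableOn (fun x => -(GD x) + A x) (Ioo 0 L) := hGD_neg_int.add hA_int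
  have hW2_int : IntegrableOn (fun x => 2 * Wf x) (Ioo 0 L) := hW_int.const_mul 2
  have hDt : D t = -(G L - G 0) + (∫ x in Ioo 0 L, A x) - 2 * ∫ x in Ioo 0 L, Wf x := by
    have h1 : D t = ∫ x in Ioo 0 L, (-(GD x) + A x - 2 * Wf x) :=
      setIntegral_congr_fun measurableSet_Ioo hpoint
    rw [h1, integral_sub hsum_int hW2_int, integral_add hGD_neg_int hA_int,
      integral_neg, MeasureTheory.integral_const_mul, hIBP]
  rw [hDt] at hVder
  exact hVder
end

section
/- Let n ≥ 1, 1 ≤ m ≤ n, L > 0. Let Λ : [0,L] → ℝⁿ be continuously differentiable with Λ_i(x) > 0 for i ≤ m and Λ_i(x) < 0 for i > m, for all x, and let M : [0,L] → M_n(ℝ) be continuous. Let G : ℝⁿ → ℝⁿ with G(0) = 0 and let K be an n×n matrix with nonnegative entries such that |G(z)_i| ≤ ∑_j K_{ij}|z_j| for all z ∈ ℝⁿ and i. Assume there exists a continuously differentiable J : [0,L] → ℝⁿ with J_i(x) > 0 such that: (i) the symmetric matrix −(J²Λ)'(x) + J(x)²M(x) + M(x)ᵀJ(x)² is positive definite uniformly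 in x ∈ [0,L], i.e. there exists λ_m > 0 with ξᵀ(−(J²Λ)'(x) + J(x)²M(x) + M(x)ᵀJ(x)²)ξ ≥ λ_m|ξ|² for all x, ξ; (ii) the matrix N := P − KᵀQK is positive semidefinite, where P = diag(p_i) with p_i = J_i(L)²Λ_i(L) for i ≤ m, p_i = J_i(0)²|Λ_i(0)| for i > m, and Q = diag(q_i) with q_i = J_i(0)²Λ_i(0) for i ≤ m, q_i = J_i(L)²|Λ_i(L)| for i > m. Then there exist C > 0 and γ > 0 such that for every T > 0, every continuously differentiable solution u : [0,T]×[0,L] → ℝⁿ of the linear system ∂_t u(t,x) + Λ(x)∂_x u(t,x) + M(x)u(t,x) = 0 with boundary conditions u_i(t,0) = G_i(w(t)) for i ≤ m and u_i(t,L) = G_i(w(t)) for i > m, where w(t) := (u₁(t,L),…,u_m(t,L), u_{m+1}(t,0),…,u_n(t,0)), satisfies ‖u(t,·)‖_{L²} ≤ C e^{−γ t}‖u(0,·)‖_{L²} for all t ∈ [0,T]. -/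
open MeasureTheory Set Matrix

lemma quadA {n : ℕ} (d w : Fin n → ℝ) (A : Matrix (Fin n) (Fin n) ℝ) (ξ : Fin n → ℝ) :
    ξ ⬝ᵥ ((Matrix.diagonal d + Matrix.diagonal w * A + Aᵀ * Matrix.diagonal w) *ᵥ ξ)
      = ∑ i, d i * ξ i ^ 2 + 2 * ∑ i, w i * ξ i * (A *ᵥ ξ) i := by
  have h3 : ξ ⬝ᵥ ((Aᵀ * Matrix.diagonal w) *ᵥ ξ)
      = ξ ⬝ᵥ ((Matrix.diagonal w * A) *ᵥ ξ) := by
    have : Aᵀ * Matrix.diagonal w = (Matrix.diagonal w * A)ᵀ := by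
      rw [Matrix.transpose_mul, Matrix.diagonal_transpose]
    rw [this, Matrix.dotProduct_mulVec, Matrix.vecMul_transpose, dotProduct_comm]
  rw [Matrix.add_mulVec, Matrix.add_mulVec, dotProduct_add, dotProduct_add, h3]
  simp only [Matrix.mulVec_diagonal, ← Matrix.mulVec_mulVec, dotProduct,
    Matrix.mulVec_diagonal]
  ring_nf
  congr 1
  · exact Finset.sum_congr rfl fun i _ => by ring
  · congr 1
    exact Finset.sum_congr rfl fun i _ => by ring

lemma quadB {n : ℕ} (p q : Fin n → ℝ) (K : Matrix (Fin n) (Fin n) ℝ) (v : Fin n → ℝ) :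
    v ⬝ᵥ ((Matrix.diagonal p - Kᵀ * Matrix.diagonal q * K) *ᵥ v)
      = ∑ i, p i * v i ^ 2 - ∑ i, q i * ((K *ᵥ v) i) ^ 2 := by
  rw [Matrix.sub_mulVec, dotProduct_sub]
  congr 1
  · simp [Matrix.mulVec_diagonal, dotProduct]; ring_nf
    exact Finset.sum_congr rfl fun i _ => by ring
  · rw [Matrix.mul_assoc, ← Matrix.mulVec_mulVec, Matrix.dotProduct_mulVec,
      Matrix.vecMul_transpose, ← Matrix.mulVec_mulVec]
    simp [Matrix.mulVec_diagonal, dotProduct]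
    exact Finset.sum_congr rfl fun i _ => by ring

set_option maxHeartbeats 1000000

/-- specialization of the main theorem to the linear local source term
`B(u,x) = M(x)u`: if `−(J²Λ)' + J²M + MᵀJ²` is uniformly positive definite on `[0,L]`
and the boundary matrix `N = P − KᵀQK` is positive semidefinite, then the system is
exponentially stable in the `L²` norm. -/
theorem stmt_6 (n m : ℕ) (hm : 1 ≤ m) (hmn : m ≤ n) (L : ℝ) (hL : 0 < L)
    (Λ J : ℝ → Fin n → ℝ)
    (hΛC1 : ∀ i, ContDiffOn ℝ 1 (fun x => Λ x i) (Icc 0 L))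
    (hJC1 : ∀ i, ContDiffOn ℝ 1 (fun x => J x i) (Icc 0 L))
    (hJpos : ∀ i, ∀ x ∈ Icc (0:ℝ) L, 0 < J x i)
    (hΛsign : ∀ x ∈ Icc (0:ℝ) L, ∀ i : Fin n,
      ((i : ℕ) < m → 0 < Λ x i) ∧ (m ≤ (i : ℕ) → Λ x i < 0))
    (M : ℝ → Matrix (Fin n) (Fin n) ℝ)
    (hMcont : ContinuousOn M (Icc 0 L))
    (G : (Fin n → ℝ) → Fin n → ℝ) (hG0 : G 0 = 0)
    (K : Matrix (Fin n) (Fin n) ℝ) (hK : ∀ i j, 0 ≤ K i j)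
    (hGK : ∀ z : Fin n → ℝ, ∀ i, |G z i| ≤ ∑ j, K i j * |z j|)
    -- (i) interior condition
    (lam : ℝ) (hlam : 0 < lam)
    (hint : ∀ x ∈ Icc (0:ℝ) L, ∀ ξ : Fin n → ℝ,
      lam * ∑ i, ξ i ^ 2 ≤
        ξ ⬝ᵥ ((Matrix.diagonal
              (fun i => -(derivWithin (fun y => (J y i) ^ 2 * Λ y i) (Icc 0 L) x))
            + Matrix.diagonal (fun i => (J x i) ^ 2) * M x
            + (M x)ᵀ * Matrix.diagonal (fun i => (J x i) ^ 2)) *ᵥ ξ))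
    -- (ii) boundary condition
    (hbd : (Matrix.diagonal (fun i : Fin n =>
          if (i : ℕ) < m then (J L i) ^ 2 * Λ L i else (J 0 i) ^ 2 * |Λ 0 i|)
        - Kᵀ * Matrix.diagonal (fun i : Fin n =>
          if (i : ℕ) < m then (J 0 i) ^ 2 * Λ 0 i else (J L i) ^ 2 * |Λ L i|)
          * K).PosSemidef) :
    ∃ C > (0:ℝ), ∃ γ > (0:ℝ), ∀ T > (0:ℝ), ∀ u ut ux : ℝ → ℝ → Fin n → ℝ,
      (∀ i, ContinuousOn (fun p : ℝ × ℝ => u p.1 p.2 i) (Icc 0 T ×ˢ Icc 0 L)) →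
      (∀ i, ContinuousOn (fun p : ℝ × ℝ => ut p.1 p.2 i) (Icc 0 T ×ˢ Icc 0 L)) →
      (∀ i, ContinuousOn (fun p : ℝ × ℝ => ux p.1 p.2 i) (Icc 0 T ×ˢ Icc 0 L)) →
      (∀ i, ∀ t ∈ Icc (0:ℝ) T, ∀ x ∈ Icc (0:ℝ) L,
        HasDerivWithinAt (fun s => u s x i) (ut t x i) (Icc 0 T) t) →
      (∀ i, ∀ t ∈ Icc (0:ℝ) T, ∀ x ∈ Icc (0:ℝ) L,
        HasDerivWithinAt (fun y => u t y i) (ux t x i) (Icc 0 L) x) →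
      -- linear PDE
      (∀ t ∈ Icc (0:ℝ) T, ∀ x ∈ Icc (0:ℝ) L, ∀ i,
        ut t x i + Λ x i * ux t x i + (M x *ᵥ u t x) i = 0) →
      -- boundary conditions
      (∀ t ∈ Icc (0:ℝ) T, ∀ i : Fin n,
        ((i : ℕ) < m →
          u t 0 i = G (fun j => if (j : ℕ) < m then u t L j else u t 0 j) i) ∧
        (m ≤ (i : ℕ) →
          u t L i = G (fun j => if (j : ℕ) < m then u t L j else u t 0 j) i)) →
      ∀ t ∈ Icc (0:ℝ) T,
        Real.sqrt (∫ x in Ioo 0 L, ∑ i, (u t x i) ^ 2)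
          ≤ C * Real.exp (-γ * t) * Real.sqrt (∫ x in Ioo 0 L, ∑ i, (u 0 x i) ^ 2) := by
  classical
  have hn : 0 < n := lt_of_lt_of_le hm hmn
  haveI : Nonempty (Fin n) := ⟨⟨0, hn⟩⟩
  have h0L : (0:ℝ) ∈ Icc (0:ℝ) L := ⟨le_rfl, hL.le⟩
  have hLL : L ∈ Icc (0:ℝ) L := ⟨hL.le, le_rfl⟩
  have hJc : ∀ i, ContinuousOn (fun x => J x i) (Icc 0 L) := fun i => (hJC1 i).continuousOn
  have hΛc : ∀ i, ContinuousOn (fun x => Λ x i) (Icc 0 L) := fun i => (hΛC1 i).continuousOn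
  -- the C¹ function A = J²Λ and its derivative D
  have hAC1 : ∀ i, ContDiffOn ℝ 1 (fun y => J y i ^ 2 * Λ y i) (Icc 0 L) :=
    fun i => ((hJC1 i).pow 2).mul (hΛC1 i)
  set D : ℝ → Fin n → ℝ :=
    fun x i => derivWithin (fun y => J y i ^ 2 * Λ y i) (Icc 0 L) x with hDdef
  have hDderiv : ∀ i, ∀ x ∈ Icc (0:ℝ) L,
      HasDerivWithinAt (fun y => J y i ^ 2 * Λ y i) (D x i) (Icc 0 L) x :=
    fun i x hx => (((hAC1 i).differentiableOn one_ne_zero) x hx).hasDerivWithinAt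
  have hDc : ∀ i, ContinuousOn (fun x => D x i) (Icc 0 L) :=
    fun i => (hAC1 i).continuousOn_derivWithin (uniqueDiffOn_Icc hL) le_rfl
  -- upper bound on J
  obtain ⟨CJ, hCJ⟩ : ∃ C, ∀ x ∈ Icc (0:ℝ) L, ∀ i, |J x i| ≤ C := by
    obtain ⟨C, hC⟩ := isCompact_Icc.exists_bound_of_continuousOn
      (f := fun x => (fun i => J x i)) (continuousOn_pi.2 hJc)
    exact ⟨C, fun x hx i => (norm_le_pi_norm (fun i => J x i) i).trans (hC x hx)⟩
  set C1 : ℝ := max CJ 1 with hC1def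
  have hC1pos : (0:ℝ) < C1 := lt_of_lt_of_le one_pos (le_max_right _ _)
  have hJle : ∀ x ∈ Icc (0:ℝ) L, ∀ i, J x i ^ 2 ≤ C1 ^ 2 := by
    intro x hx i
    have h1 : |J x i| ≤ C1 := (hCJ x hx i).trans (le_max_left _ _)
    calc J x i ^ 2 = |J x i| ^ 2 := (sq_abs _).symm
    _ ≤ C1 ^ 2 := by nlinarith [abs_nonneg (J x i)]
  -- positive lower bound on J
  have hjlow : ∀ i : Fin n, ∃ c : ℝ, 0 < c ∧ ∀ x ∈ Icc (0:ℝ) L, c ≤ J x i := by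
    intro i
    obtain ⟨x₀, hx₀, hmin⟩ := isCompact_Icc.exists_isMinOn (nonempty_Icc.2 hL.le) (hJc i)
    exact ⟨J x₀ i, hJpos i x₀ hx₀, fun x hx => hmin hx⟩
  choose jc hjc0 hjcle using hjlow
  set j0 : ℝ := Finset.univ.inf' Finset.univ_nonempty jc with hj0def
  have hj0pos : 0 < j0 := (Finset.lt_inf'_iff _).2 fun i _ => hjc0 i
  have hj0le : ∀ x ∈ Icc (0:ℝ) L, ∀ i, j0 ≤ J x i :=
    fun x hx i => le_trans (Finset.inf'_le _ (Finset.mem_univ i)) (hjcle i x hx)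
  have hj0sq : ∀ x ∈ Icc (0:ℝ) L, ∀ i, j0 ^ 2 ≤ J x i ^ 2 := by
    intro x hx i
    nlinarith [hj0le x hx i, hj0pos]
  set δ : ℝ := lam / C1 ^ 2 with hδdef
  have hδpos : 0 < δ := div_pos hlam (by positivity)
  refine ⟨C1 / j0, by positivity, δ / 2, by positivity, ?_⟩

  intro T hT u ut ux hu hut hux hdert hderx hpde hbc
  have h0T : (0:ℝ) ∈ Icc (0:ℝ) T := ⟨le_rfl, hT.le⟩
  -- continuity in x for fixed t, and in t for fixed x
  have hcu : ∀ t ∈ Icc (0:ℝ) T, ∀ i, ContinuousOn (fun x => u t x i) (Icc 0 L) :=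
    fun t ht i => (hu i).comp (Continuous.prodMk_right t).continuousOn (fun x hx => ⟨ht, hx⟩)
  have hcut : ∀ t ∈ Icc (0:ℝ) T, ∀ i, ContinuousOn (fun x => ut t x i) (Icc 0 L) :=
    fun t ht i => (hut i).comp (Continuous.prodMk_right t).continuousOn (fun x hx => ⟨ht, hx⟩)
  have hcux : ∀ t ∈ Icc (0:ℝ) T, ∀ i, ContinuousOn (fun x => ux t x i) (Icc 0 L) :=
    fun t ht i => (hux i).comp (Continuous.prodMk_right t).continuousOn (fun x hx => ⟨ht, hx⟩)
  have hcu_t : ∀ x ∈ Icc (0:ℝ) L, ∀ i, ContinuousOn (fun s => u s x i) (Icc 0 T) :=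
    fun x hx i => (hu i).comp (continuous_id.prodMk continuous_const).continuousOn
      (fun s hs => ⟨hs, hx⟩)
  -- uniform bounds on u and ut
  obtain ⟨Cu, hCu⟩ : ∃ C, ∀ t ∈ Icc (0:ℝ) T, ∀ x ∈ Icc (0:ℝ) L, ∀ i, |u t x i| ≤ C := by
    obtain ⟨C, hC⟩ := (isCompact_Icc.prod isCompact_Icc).exists_bound_of_continuousOn
      (f := fun p : ℝ × ℝ => (fun i => u p.1 p.2 i)) (continuousOn_pi.2 hu)
    exact ⟨C, fun t ht x hx i =>
      (norm_le_pi_norm (fun i => u t x i) i).trans (hC (t, x) ⟨ht, hx⟩)⟩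
  obtain ⟨Cut, hCut⟩ : ∃ C, ∀ t ∈ Icc (0:ℝ) T, ∀ x ∈ Icc (0:ℝ) L, ∀ i, |ut t x i| ≤ C := by
    obtain ⟨C, hC⟩ := (isCompact_Icc.prod isCompact_Icc).exists_bound_of_continuousOn
      (f := fun p : ℝ × ℝ => (fun i => ut p.1 p.2 i)) (continuousOn_pi.2 hut)
    exact ⟨C, fun t ht x hx i =>
      (norm_le_pi_norm (fun i => ut t x i) i).trans (hC (t, x) ⟨ht, hx⟩)⟩
  have hCu0 : 0 ≤ Cu := le_trans (abs_nonneg _) (hCu 0 h0T 0 h0L ⟨0, hn⟩)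
  have hCut0 : 0 ≤ Cut := le_trans (abs_nonneg _) (hCut 0 h0T 0 h0L ⟨0, hn⟩)
  -- the basic functions
  set F : ℝ → ℝ → ℝ := fun t x => ∑ i, J x i ^ 2 * u t x i ^ 2 with hFdef
  set Ft : ℝ → ℝ → ℝ := fun t x => ∑ i, J x i ^ 2 * (2 * u t x i * ut t x i) with hFtdef
  set V : ℝ → ℝ := fun t => ∫ x in (0:ℝ)..L, F t x with hVdef
  set Vd : ℝ → ℝ := fun t => ∫ x in (0:ℝ)..L, Ft t x with hVddef
  set H2 : ℝ → ℝ → ℝ := fun t x => ∑ i, (J x i ^ 2 * Λ x i) * u t x i ^ 2 with hH2def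
  set Hx : ℝ → ℝ → ℝ := fun t x => ∑ i,
    (D x i * u t x i ^ 2 + (J x i ^ 2 * Λ x i) * (2 * u t x i * ux t x i)) with hHxdef
  set R : ℝ → ℝ → ℝ := fun t x => ∑ i,
    (D x i * u t x i ^ 2 - 2 * (J x i ^ 2 * u t x i * (M x *ᵥ u t x) i)) with hRdef
  have hInt : ∀ {f : ℝ → ℝ}, ContinuousOn f (Icc 0 L) → IntervalIntegrable f volume 0 L :=
    fun h => h.intervalIntegrable_of_Icc hL.le
  have hMentry : ∀ i j, ContinuousOn (fun x => M x i j) (Icc 0 L) :=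
    fun i j => (continuous_apply j).comp_continuousOn
      ((continuous_apply i).comp_continuousOn hMcont)
  have hFc : ∀ t ∈ Icc (0:ℝ) T, ContinuousOn (F t) (Icc 0 L) := by
    intro t ht
    exact continuousOn_finset_sum _ fun i _ => ((hJc i).pow 2).mul ((hcu t ht i).pow 2)
  have hFtc : ∀ t ∈ Icc (0:ℝ) T, ContinuousOn (Ft t) (Icc 0 L) := by
    intro t ht
    exact continuousOn_finset_sum _ fun i _ => ((hJc i).pow 2).mul
      ((continuousOn_const.mul (hcu t ht i)).mul (hcut t ht i))
  have hH2c : ∀ t ∈ Icc (0:ℝ) T, ContinuousOn (H2 t) (Icc 0 L) := by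
    intro t ht
    exact continuousOn_finset_sum _ fun i _ =>
      (((hJc i).pow 2).mul (hΛc i)).mul ((hcu t ht i).pow 2)
  have hHxc : ∀ t ∈ Icc (0:ℝ) T, ContinuousOn (Hx t) (Icc 0 L) := by
    intro t ht
    refine continuousOn_finset_sum _ fun i _ => ((hDc i).mul ((hcu t ht i).pow 2)).add ?_
    exact (((hJc i).pow 2).mul (hΛc i)).mul
      ((continuousOn_const.mul (hcu t ht i)).mul (hcux t ht i))
  have hMu : ∀ t ∈ Icc (0:ℝ) T, ∀ i, ContinuousOn (fun x => (M x *ᵥ u t x) i) (Icc 0 L) := by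
    intro t ht i
    have h : ContinuousOn (fun x => ∑ j, M x i j * u t x j) (Icc 0 L) :=
      continuousOn_finset_sum _ fun j _ => (hMentry i j).mul (hcu t ht j)
    simpa [Matrix.mulVec, dotProduct] using h
  have hRc : ∀ t ∈ Icc (0:ℝ) T, ContinuousOn (R t) (Icc 0 L) := by
    intro t ht
    refine continuousOn_finset_sum _ fun i _ => ((hDc i).mul ((hcu t ht i).pow 2)).sub ?_
    exact continuousOn_const.mul ((((hJc i).pow 2).mul (hcu t ht i)).mul (hMu t ht i))
  have hU2c : ∀ t ∈ Icc (0:ℝ) T, ContinuousOn (fun x => ∑ i, u t x i ^ 2) (Icc 0 L) := by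
    intro t ht
    exact continuousOn_finset_sum _ fun i _ => (hcu t ht i).pow 2
  have hmeas : ∀ t ∈ Icc (0:ℝ) T,
      AEStronglyMeasurable (F t) (volume.restrict (uIoc (0:ℝ) L)) := by
    intro t ht
    rw [uIoc_of_le hL.le]
    exact ((hFc t ht).mono Ioc_subset_Icc_self).aestronglyMeasurable measurableSet_Ioc
  -- derivative of V at interior points
  have key : ∀ t₀ ∈ Ioo (0:ℝ) T, HasDerivAt V (Vd t₀) t₀ := by
    intro t₀ ht₀
    set ε : ℝ := min t₀ (T - t₀) with hεdef
    have hε : 0 < ε := lt_min ht₀.1 (sub_pos.2 ht₀.2)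
    have hball : Metric.ball t₀ ε ⊆ Ioo 0 T := by
      intro s hs
      rw [Real.ball_eq_Ioo] at hs
      have h1 : ε ≤ t₀ := min_le_left _ _
      have h2 : ε ≤ T - t₀ := min_le_right _ _
      exact ⟨by linarith [hs.1], by linarith [hs.2]⟩
    have hres := intervalIntegral.hasDerivAt_integral_of_dominated_loc_of_deriv_le
      (F := F) (F' := Ft) (x₀ := t₀) (a := 0) (b := L) (μ := volume)
      (bound := fun _ => (n : ℝ) * (C1 ^ 2 * (2 * Cu * Cut))) (Metric.ball_mem_nhds t₀ hε)
      (Filter.eventually_of_mem (Ioo_mem_nhds ht₀.1 ht₀.2)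
        (fun s hs => hmeas s (Ioo_subset_Icc_self hs)))
      (hInt (hFc t₀ (Ioo_subset_Icc_self ht₀)))
      (by rw [uIoc_of_le hL.le]
          exact ((hFtc t₀ (Ioo_subset_Icc_self ht₀)).mono
            Ioc_subset_Icc_self).aestronglyMeasurable measurableSet_Ioc)
      ?_ intervalIntegrable_const ?_
    · exact hres.2
    · -- bound
      refine MeasureTheory.ae_of_all _ fun x hx s hs => ?_
      have hxI : x ∈ Icc (0:ℝ) L := by
        rw [uIoc_of_le hL.le] at hx; exact Ioc_subset_Icc_self hx
      have hsI : s ∈ Icc (0:ℝ) T := Ioo_subset_Icc_self (hball hs)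
      rw [Real.norm_eq_abs]
      calc |Ft s x| ≤ ∑ i, |J x i ^ 2 * (2 * u s x i * ut s x i)| := by
            rw [hFtdef]; exact Finset.abs_sum_le_sum_abs _ _
      _ ≤ ∑ _i : Fin n, C1 ^ 2 * (2 * Cu * Cut) := by
            refine Finset.sum_le_sum fun i _ => ?_
            have h1 : |J x i ^ 2 * (2 * u s x i * ut s x i)|
                = J x i ^ 2 * (2 * |u s x i| * |ut s x i|) := by
              rw [abs_mul, abs_of_nonneg (sq_nonneg _), abs_mul, abs_mul, abs_two]
            rw [h1]
            have h2 := hJle x hxI i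
            have h3 := hCu s hsI x hxI i
            have h4 := hCut s hsI x hxI i
            have h6 : J x i ^ 2 * |u s x i| ≤ C1 ^ 2 * Cu :=
              mul_le_mul h2 h3 (abs_nonneg _) (by positivity)
            have h7 : J x i ^ 2 * |u s x i| * |ut s x i| ≤ C1 ^ 2 * Cu * Cut :=
              mul_le_mul h6 h4 (abs_nonneg _) (by positivity)
            nlinarith [h7]
      _ = (n : ℝ) * (C1 ^ 2 * (2 * Cu * Cut)) := by
            rw [Finset.sum_const, Finset.card_univ, Fintype.card_fin, nsmul_eq_mul]
    · -- differentiability in t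
      refine MeasureTheory.ae_of_all _ fun x hx s hs => ?_
      have hxI : x ∈ Icc (0:ℝ) L := by
        rw [uIoc_of_le hL.le] at hx; exact Ioc_subset_Icc_self hx
      have hsO : s ∈ Ioo (0:ℝ) T := hball hs
      have hder : ∀ i : Fin n, HasDerivAt (fun s => J x i ^ 2 * u s x i ^ 2)
          (J x i ^ 2 * (2 * u s x i * ut s x i)) s := by
        intro i
        have h := (hdert i s (Ioo_subset_Icc_self hsO) x hxI).hasDerivAt
          (Icc_mem_nhds hsO.1 hsO.2)
        have h2 := (h.pow 2).const_mul (J x i ^ 2)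
        simpa [pow_one, mul_assoc, mul_comm, mul_left_comm] using h2
      have := HasDerivAt.sum (fun i (_ : i ∈ Finset.univ) => hder i)
      simpa [Finset.sum_fn, hFdef, hFtdef] using this
  -- FTC for H2 in x
  have hH2ftc : ∀ t ∈ Icc (0:ℝ) T, ∫ x in (0:ℝ)..L, Hx t x = H2 t L - H2 t 0 := by
    intro t ht
    refine intervalIntegral.integral_eq_sub_of_hasDeriv_right_of_le hL.le (hH2c t ht)
      (fun x hx => ?_) (hInt (hHxc t ht))
    have hxI : x ∈ Icc (0:ℝ) L := Ioo_subset_Icc_self hx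
    have hder : ∀ i : Fin n, HasDerivWithinAt
        (fun y => (J y i ^ 2 * Λ y i) * u t y i ^ 2)
        (D x i * u t x i ^ 2 + (J x i ^ 2 * Λ x i) * (2 * u t x i * ux t x i))
        (Icc 0 L) x := by
      intro i
      have h1 := hDderiv i x hxI
      have h2 := (hderx i t ht x hxI).pow 2
      have h3 := h1.mul h2
      simpa [Pi.mul_def, Pi.pow_def, pow_one, mul_assoc, mul_comm, mul_left_comm] using h3
    have hsum := HasDerivWithinAt.sum (fun i (_ : i ∈ Finset.univ) => hder i)
    have hmono := hsum.mono_of_mem_nhdsWithin (Icc_mem_nhdsGT_of_mem ⟨hx.1.le, hx.2⟩)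
    simpa [Finset.sum_fn, hH2def, hHxdef] using hmono
  -- pointwise identity via the PDE
  have hFtR : ∀ t ∈ Icc (0:ℝ) T, ∀ x ∈ Icc (0:ℝ) L, Ft t x = R t x - Hx t x := by
    intro t ht x hx
    simp only [hFtdef, hRdef, hHxdef]
    rw [← Finset.sum_sub_distrib]
    refine Finset.sum_congr rfl fun i _ => ?_
    have h := hpde t ht x hx i
    have hu' : ut t x i = -(Λ x i * ux t x i) - (M x *ᵥ u t x) i := by linarith
    rw [hu']; ring
  -- interior estimate
  have hRle : ∀ t ∈ Icc (0:ℝ) T, ∀ x ∈ Icc (0:ℝ) L,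
      R t x ≤ -lam * ∑ i, u t x i ^ 2 := by
    intro t ht x hx
    have h := hint x hx (u t x)
    rw [quadA] at h
    have hRval : R t x = -((∑ i, -(D x i) * u t x i ^ 2)
        + 2 * ∑ i, J x i ^ 2 * u t x i * (M x *ᵥ u t x) i) := by
      simp only [hRdef]
      rw [Finset.sum_sub_distrib]
      have e1 : (∑ i : Fin n, -(D x i) * u t x i ^ 2)
          = -∑ i : Fin n, D x i * u t x i ^ 2 := by
        rw [← Finset.sum_neg_distrib]
        exact Finset.sum_congr rfl fun i _ => by ring
      have e2 : (∑ i : Fin n, 2 * (J x i ^ 2 * u t x i * (M x *ᵥ u t x) i))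
          = 2 * ∑ i : Fin n, J x i ^ 2 * u t x i * (M x *ᵥ u t x) i := Finset.mul_sum _ _ _ |>.symm
      rw [e1, ← e2]
      ring
    rw [hRval]
    linarith
  -- boundary estimate
  have hbdry : ∀ t ∈ Icc (0:ℝ) T, 0 ≤ H2 t L - H2 t 0 := by
    intro t ht
    set w : Fin n → ℝ := fun j => if (j : ℕ) < m then u t L j else u t 0 j with hwdef
    set v : Fin n → ℝ := fun j => |w j| with hvdef
    have hPS := hbd.dotProduct_mulVec_nonneg v
    rw [star_trivial, quadB] at hPS
    have hq0 : ∀ i : Fin n,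
        0 ≤ (if (i : ℕ) < m then J 0 i ^ 2 * Λ 0 i else J L i ^ 2 * |Λ L i|) := by
      intro i
      by_cases hi : (i : ℕ) < m
      · simp only [hi, if_true]
        exact mul_nonneg (sq_nonneg _) ((hΛsign 0 h0L i).1 hi).le
      · simp only [hi, if_false]
        exact mul_nonneg (sq_nonneg _) (abs_nonneg _)
    have hKv : ∀ i, (K *ᵥ v) i = ∑ j, K i j * |w j| := by
      intro i; simp [Matrix.mulVec, dotProduct, hvdef]
    have hKv0 : ∀ i, 0 ≤ (K *ᵥ v) i := by
      intro i; rw [hKv]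
      exact Finset.sum_nonneg fun j _ => mul_nonneg (hK i j) (abs_nonneg _)
    have hgK : ∀ i, (G w i) ^ 2 ≤ ((K *ᵥ v) i) ^ 2 := by
      intro i
      have h1 : |G w i| ≤ (K *ᵥ v) i := by rw [hKv]; exact hGK w i
      calc (G w i) ^ 2 = |G w i| ^ 2 := (sq_abs _).symm
      _ ≤ ((K *ᵥ v) i) ^ 2 := by nlinarith [abs_nonneg (G w i)]
    have hexp : H2 t L - H2 t 0 =
        (∑ i : Fin n, (if (i : ℕ) < m then J L i ^ 2 * Λ L i else J 0 i ^ 2 * |Λ 0 i|) * w i ^ 2)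
        - ∑ i : Fin n, (if (i : ℕ) < m then J 0 i ^ 2 * Λ 0 i else J L i ^ 2 * |Λ L i|)
            * (G w i) ^ 2 := by
      simp only [hH2def]
      rw [← Finset.sum_sub_distrib, ← Finset.sum_sub_distrib]
      refine Finset.sum_congr rfl fun i _ => ?_
      have hbci := hbc t ht i
      by_cases hi : (i : ℕ) < m
      · have h0 : u t 0 i = G w i := hbci.1 hi
        have hwi : w i = u t L i := by rw [hwdef]; simp [hi]
        simp only [hi, if_true]
        rw [h0, hwi]
      · have him : m ≤ (i : ℕ) := le_of_not_gt hi
        have hLi : u t L i = G w i := hbci.2 him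
        have hwi : w i = u t 0 i := by rw [hwdef]; simp [hi]
        have hΛ0 : Λ 0 i < 0 := (hΛsign 0 h0L i).2 him
        have hΛL : Λ L i < 0 := (hΛsign L hLL i).2 him
        have ha0 : |Λ 0 i| = -Λ 0 i := abs_of_neg hΛ0
        have haL : |Λ L i| = -Λ L i := abs_of_neg hΛL
        simp only [hi, if_false]
        rw [hLi, hwi, ha0, haL]; ring
    rw [hexp]
    have hsq : ∀ i : Fin n, v i ^ 2 = w i ^ 2 := fun i => by rw [hvdef]; exact sq_abs _
    have h1 : (∑ i : Fin n, (if (i : ℕ) < m then J L i ^ 2 * Λ L i else J 0 i ^ 2 * |Λ 0 i|) * v i ^ 2)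
        = ∑ i : Fin n, (if (i : ℕ) < m then J L i ^ 2 * Λ L i else J 0 i ^ 2 * |Λ 0 i|) * w i ^ 2 :=
      Finset.sum_congr rfl fun i _ => by rw [hsq i]
    have h2 : (∑ i : Fin n, (if (i : ℕ) < m then J 0 i ^ 2 * Λ 0 i else J L i ^ 2 * |Λ L i|)
          * (G w i) ^ 2)
        ≤ ∑ i : Fin n, (if (i : ℕ) < m then J 0 i ^ 2 * Λ 0 i else J L i ^ 2 * |Λ L i|)
          * ((K *ᵥ v) i) ^ 2 :=
      Finset.sum_le_sum fun i _ => mul_le_mul_of_nonneg_left (hgK i) (hq0 i)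
    linarith [hPS, h1 ▸ hPS]
  -- the differential inequality
  have hVd_le : ∀ t₀ ∈ Ioo (0:ℝ) T, Vd t₀ ≤ -δ * V t₀ := by
    intro t₀ ht₀
    have htI : t₀ ∈ Icc (0:ℝ) T := Ioo_subset_Icc_self ht₀
    have hRint : IntervalIntegrable (R t₀) volume 0 L := hInt (hRc t₀ htI)
    have hHxint : IntervalIntegrable (Hx t₀) volume 0 L := hInt (hHxc t₀ htI)
    have hU2int : IntervalIntegrable (fun x => ∑ i, u t₀ x i ^ 2) volume 0 L :=
      hInt (hU2c t₀ htI)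
    have h1 : Vd t₀ = (∫ x in (0:ℝ)..L, R t₀ x) - ∫ x in (0:ℝ)..L, Hx t₀ x := by
      simp only [hVddef]
      rw [intervalIntegral.integral_congr (g := fun x => R t₀ x - Hx t₀ x)
        (fun x hx => hFtR t₀ htI x (by rwa [uIcc_of_le hL.le] at hx))]
      exact intervalIntegral.integral_sub hRint hHxint
    have h2 : (∫ x in (0:ℝ)..L, R t₀ x) ≤ ∫ x in (0:ℝ)..L, -lam * ∑ i, u t₀ x i ^ 2 :=
      intervalIntegral.integral_mono_on hL.le hRint (hU2int.const_mul _)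
        (fun x hx => hRle t₀ htI x hx)
    have h3 : (∫ x in (0:ℝ)..L, -lam * ∑ i, u t₀ x i ^ 2)
        = -lam * ∫ x in (0:ℝ)..L, ∑ i, u t₀ x i ^ 2 :=
      intervalIntegral.integral_const_mul _ _
    have h4 : V t₀ ≤ C1 ^ 2 * ∫ x in (0:ℝ)..L, ∑ i, u t₀ x i ^ 2 := by
      simp only [hVdef]
      rw [← intervalIntegral.integral_const_mul]
      refine intervalIntegral.integral_mono_on hL.le (hInt (hFc t₀ htI))
        (hU2int.const_mul _) (fun x hx => ?_)
      simp only [hFdef]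
      rw [Finset.mul_sum]
      exact Finset.sum_le_sum fun i _ =>
        mul_le_mul_of_nonneg_right (hJle x hx i) (sq_nonneg _)
    have h5 : 0 ≤ ∫ x in (0:ℝ)..L, ∑ i, u t₀ x i ^ 2 :=
      intervalIntegral.integral_nonneg hL.le
        (fun x _ => Finset.sum_nonneg fun i _ => sq_nonneg _)
    have h6 := hbdry t₀ htI
    have h7 := hH2ftc t₀ htI
    have hδV : -lam * (∫ x in (0:ℝ)..L, ∑ i, u t₀ x i ^ 2) ≤ -δ * V t₀ := by
      have h8 : δ * V t₀ ≤ δ * (C1 ^ 2 * ∫ x in (0:ℝ)..L, ∑ i, u t₀ x i ^ 2) :=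
        mul_le_mul_of_nonneg_left h4 hδpos.le
      have h9 : δ * (C1 ^ 2 * ∫ x in (0:ℝ)..L, ∑ i, u t₀ x i ^ 2)
          = lam * ∫ x in (0:ℝ)..L, ∑ i, u t₀ x i ^ 2 := by
        rw [hδdef]; field_simp
      linarith
    have h2' : (∫ x in (0:ℝ)..L, R t₀ x)
        ≤ -lam * ∫ x in (0:ℝ)..L, ∑ i, u t₀ x i ^ 2 := h3 ▸ h2
    linarith [h1, h2', h6, h7]
  -- continuity of V on [0,T]
  have hVcont : ContinuousOn V (Icc 0 T) := by
    rw [hVdef]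
    intro t₀ ht₀
    apply intervalIntegral.continuousWithinAt_of_dominated_interval
      (bound := fun _ => (n : ℝ) * (C1 ^ 2 * (Cu * Cu)))
    · exact eventually_nhdsWithin_of_forall (fun s hs => hmeas s hs)
    · refine eventually_nhdsWithin_of_forall (fun s hs => ?_)
      refine MeasureTheory.ae_of_all _ fun x hx => ?_
      have hxI : x ∈ Icc (0:ℝ) L := by
        rw [uIoc_of_le hL.le] at hx; exact Ioc_subset_Icc_self hx
      rw [Real.norm_eq_abs]
      calc |F s x| ≤ ∑ i, |J x i ^ 2 * u s x i ^ 2| := by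
            simp only [hFdef]; exact Finset.abs_sum_le_sum_abs _ _
      _ ≤ ∑ _i : Fin n, C1 ^ 2 * (Cu * Cu) := by
            refine Finset.sum_le_sum fun i _ => ?_
            have h1 : |J x i ^ 2 * u s x i ^ 2| = J x i ^ 2 * |u s x i| ^ 2 := by
              rw [abs_mul, abs_of_nonneg (sq_nonneg _), ← sq_abs (u s x i),
                abs_of_nonneg (sq_nonneg _), sq_abs, ← sq_abs (u s x i)]
            rw [h1]
            have h2 := hJle x hxI i
            have h3 := hCu s hs x hxI i
            have h4 : |u s x i| ^ 2 ≤ Cu * Cu := by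
              nlinarith [abs_nonneg (u s x i)]
            exact mul_le_mul h2 h4 (by positivity) (by positivity)
      _ = (n : ℝ) * (C1 ^ 2 * (Cu * Cu)) := by
            rw [Finset.sum_const, Finset.card_univ, Fintype.card_fin, nsmul_eq_mul]
    · exact intervalIntegrable_const
    · refine MeasureTheory.ae_of_all _ fun x hx => ?_
      have hxI : x ∈ Icc (0:ℝ) L := by
        rw [uIoc_of_le hL.le] at hx; exact Ioc_subset_Icc_self hx
      have hc : ContinuousOn (fun s => F s x) (Icc 0 T) := by
        refine continuousOn_finset_sum _ fun i _ => continuousOn_const.mul ?_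
        exact (hcu_t x hxI i).pow 2
      exact hc.continuousWithinAt ht₀
  -- the Lyapunov function is decreasing
  set W : ℝ → ℝ := fun s => Real.exp (δ * s) * V s with hWdef
  have hWanti : AntitoneOn W (Icc 0 T) := by
    have hexpc : Continuous fun s : ℝ => Real.exp (δ * s) :=
      Real.continuous_exp.comp (continuous_const.mul continuous_id)
    have hWd : ∀ s ∈ Ioo (0:ℝ) T,
        HasDerivAt W (Real.exp (δ * s) * δ * V s + Real.exp (δ * s) * Vd s) s := by
      intro s hs
      have hde : HasDerivAt (fun y : ℝ => Real.exp (δ * y)) (Real.exp (δ * s) * δ) s := by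
        have h1 : HasDerivAt (fun y : ℝ => δ * y) (δ * 1) s := (hasDerivAt_id s).const_mul δ
        simpa using h1.exp
      exact hde.mul (key s hs)
    refine antitoneOn_of_deriv_nonpos (convex_Icc 0 T) (hexpc.continuousOn.mul hVcont) ?_ ?_
    · rw [interior_Icc]
      intro s hs
      exact ((hWd s hs).differentiableAt).differentiableWithinAt
    · rw [interior_Icc]
      intro s hs
      rw [(hWd s hs).deriv]
      have h1 := hVd_le s hs
      have h2 : (0:ℝ) < Real.exp (δ * s) := Real.exp_pos _
      nlinarith
  have hVle : ∀ t ∈ Icc (0:ℝ) T, V t ≤ Real.exp (-δ * t) * V 0 := by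
    intro t ht
    have h := hWanti h0T ht ht.1
    simp only [hWdef] at h
    rw [mul_zero, Real.exp_zero, one_mul] at h
    have he : (0:ℝ) < Real.exp (δ * t) := Real.exp_pos _
    have h2 : Real.exp (-δ * t) * (Real.exp (δ * t) * V t) = V t := by
      rw [← mul_assoc, ← Real.exp_add]
      have : -δ * t + δ * t = 0 := by ring
      rw [this, Real.exp_zero, one_mul]
    calc V t = Real.exp (-δ * t) * (Real.exp (δ * t) * V t) := h2.symm
    _ ≤ Real.exp (-δ * t) * V 0 := mul_le_mul_of_nonneg_left h (Real.exp_pos _).le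
  -- conclusion
  intro t ht
  have hSrw : ∀ s ∈ Icc (0:ℝ) T,
      (∫ x in Ioo (0:ℝ) L, ∑ i, u s x i ^ 2) = ∫ x in (0:ℝ)..L, ∑ i, u s x i ^ 2 := by
    intro s hs
    rw [intervalIntegral.integral_of_le hL.le, MeasureTheory.integral_Ioc_eq_integral_Ioo]
  rw [hSrw t ht, hSrw 0 h0T]
  have hU2int : ∀ s ∈ Icc (0:ℝ) T,
      IntervalIntegrable (fun x => ∑ i, u s x i ^ 2) volume 0 L :=
    fun s hs => hInt (hU2c s hs)
  have hlow : j0 ^ 2 * (∫ x in (0:ℝ)..L, ∑ i, u t x i ^ 2) ≤ V t := by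
    simp only [hVdef]
    rw [← intervalIntegral.integral_const_mul]
    refine intervalIntegral.integral_mono_on hL.le ((hU2int t ht).const_mul _)
      (hInt (hFc t ht)) (fun x hx => ?_)
    simp only [hFdef]
    rw [Finset.mul_sum]
    exact Finset.sum_le_sum fun i _ =>
      mul_le_mul_of_nonneg_right (hj0sq x hx i) (sq_nonneg _)
  have hup : V 0 ≤ C1 ^ 2 * ∫ x in (0:ℝ)..L, ∑ i, u 0 x i ^ 2 := by
    simp only [hVdef]
    rw [← intervalIntegral.integral_const_mul]
    refine intervalIntegral.integral_mono_on hL.le (hInt (hFc 0 h0T))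
      ((hU2int 0 h0T).const_mul _) (fun x hx => ?_)
    simp only [hFdef]
    rw [Finset.mul_sum]
    exact Finset.sum_le_sum fun i _ =>
      mul_le_mul_of_nonneg_right (hJle x hx i) (sq_nonneg _)
  have hSt0 : 0 ≤ ∫ x in (0:ℝ)..L, ∑ i, u t x i ^ 2 :=
    intervalIntegral.integral_nonneg hL.le
      (fun x _ => Finset.sum_nonneg fun i _ => sq_nonneg _)
  have hS00 : 0 ≤ ∫ x in (0:ℝ)..L, ∑ i, u 0 x i ^ 2 :=
    intervalIntegral.integral_nonneg hL.le
      (fun x _ => Finset.sum_nonneg fun i _ => sq_nonneg _)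
  set a : ℝ := ∫ x in (0:ℝ)..L, ∑ i, u t x i ^ 2 with hadef
  set b : ℝ := ∫ x in (0:ℝ)..L, ∑ i, u 0 x i ^ 2 with hbdef
  have hchain : j0 ^ 2 * a ≤ Real.exp (-δ * t) * (C1 ^ 2 * b) :=
    le_trans hlow (le_trans (hVle t ht)
      (mul_le_mul_of_nonneg_left hup (Real.exp_pos _).le))
  have hab : a ≤ (C1 / j0 * Real.exp (-(δ / 2) * t)) ^ 2 * b := by
    have he2 : Real.exp (-(δ / 2) * t) ^ 2 = Real.exp (-δ * t) := by
      rw [sq, ← Real.exp_add]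
      congr 1
      ring
    have hkey : (C1 / j0 * Real.exp (-(δ / 2) * t)) ^ 2 * b
        = (Real.exp (-δ * t) * (C1 ^ 2 * b)) / j0 ^ 2 := by
      rw [mul_pow, div_pow, he2]
      field_simp
    rw [hkey]
    rw [le_div_iff₀ (by positivity : (0:ℝ) < j0 ^ 2)]
    linarith [hchain]
  calc Real.sqrt a ≤ Real.sqrt ((C1 / j0 * Real.exp (-(δ / 2) * t)) ^ 2 * b) :=
        Real.sqrt_le_sqrt hab
  _ = (C1 / j0 * Real.exp (-(δ / 2) * t)) * Real.sqrt b := by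
      rw [Real.sqrt_mul (sq_nonneg _), Real.sqrt_sq (by positivity)]
  _ = C1 / j0 * Real.exp (-(δ / 2) * t) * Real.sqrt b := by ring
end

section
/- Let L > 0, ρ > 0, and let λ : [0,L] → ℝ be continuous with λ(s) ≥ λ₀ for all s, for some λ₀ > 0. Then for every f ∈ L²((0,L);ℝ) and every x ∈ [0,L], | ∫₀ˣ e^{−(1/ρ)∫ₛˣ λ(v)⁻¹ dv} λ(s)⁻¹ f(s) ds | ≤ √( ρ · (sup_{s∈[0,L]} λ(s)⁻¹) / 2 ) · ‖f‖_{L²(0,L)}. In particular the left-hand side tends to 0 uniformly in x and in f of bounded L² norm as ρ → 0. -/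
/-!
Write `w = λ⁻¹` and `G(s) = e^{-(1/ρ)∫ₛˣ w} w(s)`. By Cauchy–Schwarz the left-hand side is at most
`‖G‖_{L²(0,x)} ‖f‖_{L²(0,L)}`. Pointwise `G² ≤ (sup w) · e^{-(2/ρ)∫ₛˣ w} w(s)`, and the last factor
is the derivative of `(ρ/2) e^{-(2/ρ)∫ₛˣ w}`, which takes values in `(0, ρ/2]`; hence
`∫₀ˣ G² ≤ ρ (sup w) / 2`.
-/

open MeasureTheory Set

theorem abs_integral_mul_le_sqrt_mul_sqrt {α : Type*} [MeasurableSpace α] {μ : Measure α}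
    {f g : α → ℝ} (hf : MemLp f 2 μ) (hg : MemLp g 2 μ) :
    |∫ a, f a * g a ∂μ| ≤ √(∫ a, f a ^ 2 ∂μ) * √(∫ a, g a ^ 2 ∂μ) := by
  have h2 : ENNReal.ofReal 2 = 2 := by norm_num
  have hHolder := integral_mul_le_Lp_mul_Lq_of_nonneg Real.HolderConjugate.two_two
    (Filter.Eventually.of_forall fun a => abs_nonneg (f a))
    (Filter.Eventually.of_forall fun a => abs_nonneg (g a))
    (h2 ▸ hf.abs) (h2 ▸ hg.abs)
  simp only [Real.rpow_two, sq_abs, ← Real.sqrt_eq_rpow, ← abs_mul] at hHolder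
  exact abs_integral_le_integral_abs.trans hHolder

section ExpKernel

variable {w : ℝ → ℝ} {a b c : ℝ}

theorem continuousOn_intervalIntegral_left (hab : a ≤ b) (hw : ContinuousOn w (Icc a b)) :
    ContinuousOn (fun s => ∫ v in s..b, w v) (Icc a b) := by
  have := intervalIntegral.continuousOn_primitive_interval_left (μ := volume)
    (show IntegrableOn w (uIcc a b) from uIcc_of_le hab ▸ hw.integrableOn_Icc)
  rwa [uIcc_of_le hab] at this

theorem continuousOn_exp_mul_integral_mul (hab : a ≤ b) (hw : ContinuousOn w (Icc a b)) :
    ContinuousOn (fun s => Real.exp (c * ∫ v in s..b, w v) * w s) (Icc a b) := by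
  have := continuousOn_intervalIntegral_left hab hw
  fun_prop

theorem integral_exp_neg_mul_integral_mul (hab : a ≤ b) (hc : c ≠ 0)
    (hw : ContinuousOn w (Icc a b)) :
    ∫ s in a..b, Real.exp (-c * ∫ v in s..b, w v) * w s
      = (1 - Real.exp (-c * ∫ v in a..b, w v)) / c := by
  set P := fun s => ∫ v in s..b, w v
  have hPcont : ContinuousOn P (Icc a b) := continuousOn_intervalIntegral_left hab hw
  have hderiv : ∀ s ∈ Ioo a b,
      HasDerivWithinAt (fun s => Real.exp (-c * P s) / c) (Real.exp (-c * P s) * w s) (Ioi s) s := by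
    intro s hs
    have hP : HasDerivAt P (-w s) s :=
      intervalIntegral.integral_hasDerivAt_left
        ((hw.mono (Icc_subset_Icc hs.1.le le_rfl)).intervalIntegrable_of_Icc hs.2.le)
        (hw.mono Ioo_subset_Icc_self |>.stronglyMeasurableAtFilter isOpen_Ioo s hs)
        (hw.continuousAt (Icc_mem_nhds hs.1 hs.2))
    exact ((hP.const_mul (-c)).exp.div_const c).hasDerivWithinAt.congr_deriv (by field_simp)
  rw [intervalIntegral.integral_eq_sub_of_hasDeriv_right_of_le hab
    (by fun_prop) hderiv
    ((continuousOn_exp_mul_integral_mul hab hw).intervalIntegrable_of_Icc hab)]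
  simp only [P, intervalIntegral.integral_same, mul_zero, Real.exp_zero, sub_div]

theorem integral_exp_neg_mul_integral_mul_le (hab : a ≤ b) (hc : 0 < c)
    (hw : ContinuousOn w (Icc a b)) :
    ∫ s in a..b, Real.exp (-c * ∫ v in s..b, w v) * w s ≤ c⁻¹ := by
  rw [integral_exp_neg_mul_integral_mul hab hc.ne' hw, ← one_div]
  gcongr
  linarith [Real.exp_pos (-c * ∫ v in a..b, w v)]

theorem integral_sq_exp_neg_mul_integral_mul_le {M : ℝ} (hab : a ≤ b) (hc : 0 < c)
    (hw : ContinuousOn w (Icc a b)) (hw0 : ∀ s ∈ Icc a b, 0 ≤ w s)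
    (hwM : ∀ s ∈ Icc a b, w s ≤ M) :
    ∫ s in a..b, (Real.exp (-c * ∫ v in s..b, w v) * w s) ^ 2 ≤ M / (2 * c) := by
  have hM : 0 ≤ M := (hw0 a ⟨le_rfl, hab⟩).trans (hwM a ⟨le_rfl, hab⟩)
  have hpointwise : ∀ s ∈ Icc a b, (Real.exp (-c * ∫ v in s..b, w v) * w s) ^ 2
      ≤ M * (Real.exp (-(2 * c) * ∫ v in s..b, w v) * w s) := by
    intro s hs
    have hexp : Real.exp (-c * ∫ v in s..b, w v) ^ 2 = Real.exp (-(2 * c) * ∫ v in s..b, w v) := by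
      rw [← Real.exp_nat_mul]; ring_nf
    calc (Real.exp (-c * ∫ v in s..b, w v) * w s) ^ 2
        = Real.exp (-(2 * c) * ∫ v in s..b, w v) * w s * w s := by rw [mul_pow, hexp]; ring
      _ ≤ Real.exp (-(2 * c) * ∫ v in s..b, w v) * w s * M := by
          have hws := hw0 s hs
          gcongr
          exact hwM s hs
      _ = M * (Real.exp (-(2 * c) * ∫ v in s..b, w v) * w s) := by ring
  calc ∫ s in a..b, (Real.exp (-c * ∫ v in s..b, w v) * w s) ^ 2
      ≤ ∫ s in a..b, M * (Real.exp (-(2 * c) * ∫ v in s..b, w v) * w s) :=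
        intervalIntegral.integral_mono_on hab
          (((continuousOn_exp_mul_integral_mul hab hw).pow 2).intervalIntegrable_of_Icc hab)
          (((continuousOn_exp_mul_integral_mul hab hw).const_smul M).intervalIntegrable_of_Icc hab)
          hpointwise
    _ = M * ∫ s in a..b, Real.exp (-(2 * c) * ∫ v in s..b, w v) * w s :=
        intervalIntegral.integral_const_mul _ _
    _ ≤ M * (2 * c)⁻¹ := by
        gcongr
        exact integral_exp_neg_mul_integral_mul_le hab (by positivity) hw
    _ = M / (2 * c) := rfl

end ExpKernel

theorem ContinuousOn.le_ciSup_of_isCompact {X : Type*} [TopologicalSpace X] {K : Set X}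
    {g : X → ℝ} (hK : IsCompact K) (hg : ContinuousOn g K) {x : X} (hx : x ∈ K) :
    g x ≤ ⨆ y : K, g y :=
  le_ciSup (image_eq_range g K ▸ hK.bddAbove_image hg) ⟨x, hx⟩

theorem stmt_8_general (L ρ : ℝ) (hρ : 0 < ρ)
    (lam : ℝ → ℝ) (hlamcont : ContinuousOn lam (Icc 0 L))
    (lam₀ : ℝ) (hlam₀ : 0 < lam₀) (hge : ∀ s ∈ Icc (0:ℝ) L, lam₀ ≤ lam s)
    (f : ℝ → ℝ) (hfmeas : Measurable f)
    (hf2 : IntegrableOn (fun s => f s ^ 2) (Ioo 0 L))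
    (x : ℝ) (hx : x ∈ Icc (0:ℝ) L) :
    |∫ s in Ioo 0 x,
        Real.exp (-(1 / ρ) * ∫ v in Ioo s x, (lam v)⁻¹) * (lam s)⁻¹ * f s|
      ≤ Real.sqrt (ρ * (⨆ s : Icc (0:ℝ) L, (lam (s : ℝ))⁻¹) / 2)
        * Real.sqrt (∫ s in Ioo 0 L, f s ^ 2) := by
  obtain ⟨hx0, hxL⟩ := hx
  have hIcc : Icc 0 x ⊆ Icc 0 L := Icc_subset_Icc_right hxL
  have hlam_pos : ∀ s ∈ Icc 0 L, 0 < lam s := fun s hs => hlam₀.trans_le (hge s hs)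
  have hw : ContinuousOn (fun v => (lam v)⁻¹) (Icc 0 L) :=
    hlamcont.inv₀ fun s hs => (hlam_pos s hs).ne'
  set G := fun s => Real.exp (-(1 / ρ) * ∫ v in s..x, (lam v)⁻¹) * (lam s)⁻¹
  have hG : ContinuousOn G (Icc 0 x) := continuousOn_exp_mul_integral_mul hx0 (hw.mono hIcc)
  have hintegrand : ∀ s ∈ Ioo 0 x,
      Real.exp (-(1 / ρ) * ∫ v in Ioo s x, (lam v)⁻¹) * (lam s)⁻¹ * f s = G s * f s := by
    intro s hs
    simp only [G, intervalIntegral.integral_of_le hs.2.le, integral_Ioc_eq_integral_Ioo]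
  rw [setIntegral_congr_fun measurableSet_Ioo hintegrand]
  have hGmem : MemLp G 2 (volume.restrict (Ioo 0 x)) :=
    (memLp_two_iff_integrable_sq ((hG.mono Ioo_subset_Icc_self).aestronglyMeasurable
      measurableSet_Ioo)).2 ((hG.pow 2).integrableOn_Icc.mono_set Ioo_subset_Icc_self)
  have hfmem : MemLp f 2 (volume.restrict (Ioo 0 x)) :=
    (memLp_two_iff_integrable_sq hfmeas.aestronglyMeasurable).2
      (hf2.mono_set (Ioo_subset_Ioo_right hxL))
  have hG2 : ∫ s in Ioo 0 x, G s ^ 2 ≤ ρ * (⨆ s : Icc (0:ℝ) L, (lam (s : ℝ))⁻¹) / 2 := by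
    rw [← integral_Ioc_eq_integral_Ioo, ← intervalIntegral.integral_of_le hx0]
    convert integral_sq_exp_neg_mul_integral_mul_le hx0 (one_div_pos.2 hρ) (hw.mono hIcc)
      (fun s hs => (inv_pos.2 (hlam_pos s (hIcc hs))).le)
      (fun s hs => hw.le_ciSup_of_isCompact isCompact_Icc (hIcc hs)) using 1
    field_simp
  have hf2x : ∫ s in Ioo 0 x, f s ^ 2 ≤ ∫ s in Ioo 0 L, f s ^ 2 :=
    setIntegral_mono_set hf2 (Filter.Eventually.of_forall fun s => sq_nonneg (f s))
      (Ioo_subset_Ioo_right hxL).eventuallyLE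
  calc _ ≤ √(∫ s in Ioo 0 x, G s ^ 2) * √(∫ s in Ioo 0 x, f s ^ 2) :=
        abs_integral_mul_le_sqrt_mul_sqrt hGmem hfmem
    _ ≤ _ := by gcongr

/-- the weighted Cauchy–Schwarz estimate used for the range condition in
the proof of `L²` well-posedness:
`|∫₀ˣ e^{−(1/ρ)∫ₛˣ λ(v)⁻¹ dv} λ(s)⁻¹ f(s) ds| ≤ √(ρ · sup λ⁻¹ / 2) ‖f‖_{L²(0,L)}`. -/
theorem stmt_8 (L ρ : ℝ) (hL : 0 < L) (hρ : 0 < ρ)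
    (lam : ℝ → ℝ) (hlamcont : ContinuousOn lam (Icc 0 L))
    (lam₀ : ℝ) (hlam₀ : 0 < lam₀) (hge : ∀ s ∈ Icc (0:ℝ) L, lam₀ ≤ lam s)
    (f : ℝ → ℝ) (hfmeas : Measurable f)
    (hf2 : IntegrableOn (fun s => f s ^ 2) (Ioo 0 L))
    (x : ℝ) (hx : x ∈ Icc (0:ℝ) L) :
    |∫ s in Ioo 0 x,
        Real.exp (-(1 / ρ) * ∫ v in Ioo s x, (lam v)⁻¹) * (lam s)⁻¹ * f s|
      ≤ Real.sqrt (ρ * (⨆ s : Icc (0:ℝ) L, (lam (s : ℝ))⁻¹) / 2)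
        * Real.sqrt (∫ s in Ioo 0 L, f s ^ 2) :=
  stmt_8_general L ρ hρ lam hlamcont lam₀ hlam₀ hge f hfmeas hf2 x hx
end

section
/- Let L > 0, c ∈ ℝ and ε > 0. Define u₁(t,x) = ε sin(2π(t−x)/L) and u₂(t,x) = ε sin(2π(t+x)/L) for (t,x) ∈ ℝ × [0,L]. Then (u₁, u₂) is a classical solution of the open-loop system: ∂_t u₁(t,x) + ∂_x u₁(t,x) = (c/L)·sin(∫₀ᴸ u₂(t,y) dy) and ∂_t u₂(t,x) − ∂_x u₂(t,x) = (c/L)·sin(∫₀ᴸ u₁(t,y) dy) for all (t,x), together with the boundary conditions u₁(t,0) − u₂(t,0) = 0 and u₁(t,L) − u₂(t,L) = 0 for all t. In particular, ∫₀ᴸ u₂(t,y) dy = 0 and ∫₀ᴸ u₁(t,y) dy = 0 for all t, and the L² norm ‖(u₁(t,·),u₂(t,·))‖_{L²(0,L)} is constant in t and nonzero, so the null steady state of the open-loop system (feedback gain k = 0) is not asymptotically stable. -/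
/-!
Both components are travelling waves of the profile `f s = ε sin (2π s / L)`: `u₁ t x = f (t - x)`
and `u₂ t x = f (t + x)`. Travelling waves annihilate the transport operators `∂ₜ ± ∂ₓ`, and since
`f` is `L`-periodic every nonlocal term `∫₀ᴸ uᵢ(t, y) dy` is the integral of `f` over a full period,
which is `0`; so the sources `(c / L) sin (∫₀ᴸ uᵢ)` vanish. Periodicity also gives the boundary
conditions, and the energy equals `2 ∫₀ᴸ f² = ε² L` for every `t`.
-/

open MeasureTheory Set Real Function

namespace Function.Periodic

variable {E : Type*} [NormedAddCommGroup E] [NormedSpace ℝ E] {f : ℝ → E} {T : ℝ}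

theorem intervalIntegral_comp_const_sub_eq (hf : Periodic f T) (t : ℝ) :
    ∫ y in 0..T, f (t - y) = ∫ y in 0..T, f y := by
  simpa [intervalIntegral.integral_comp_sub_left] using hf.intervalIntegral_add_eq (t - T) 0

theorem intervalIntegral_comp_const_add_eq (hf : Periodic f T) (t : ℝ) :
    ∫ y in 0..T, f (t + y) = ∫ y in 0..T, f y := by
  simpa [intervalIntegral.integral_comp_add_left] using hf.intervalIntegral_add_eq t 0

end Function.Periodic

theorem deriv_comp_sub_const_add_deriv_comp_const_sub (f : ℝ → ℝ) (t x : ℝ) :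
    deriv (fun s => f (s - x)) t + deriv (fun y => f (t - y)) x = 0 := by
  rw [deriv_comp_sub_const, deriv_comp_const_sub, add_neg_cancel]

theorem deriv_comp_add_const_sub_deriv_comp_const_add (f : ℝ → ℝ) (t x : ℝ) :
    deriv (fun s => f (s + x)) t - deriv (fun y => f (t + y)) x = 0 := by
  rw [deriv_comp_add_const, deriv_comp_const_add, add_comm, sub_self]

theorem integral_Ioo_comp_const_sub_sq_add_comp_const_add_sq {f : ℝ → ℝ} {L : ℝ}
    (hf : Periodic f L) (hcont : Continuous f) (hL : 0 ≤ L) (t : ℝ) :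
    ∫ x in Ioo 0 L, (f (t - x) ^ 2 + f (t + x) ^ 2) = 2 * ∫ y in 0..L, f y ^ 2 := by
  have hsq : Periodic (fun y => f y ^ 2) L := hf.comp (· ^ 2)
  rw [← integral_Ioc_eq_integral_Ioo, ← intervalIntegral.integral_of_le hL,
    intervalIntegral.integral_add ((by fun_prop : Continuous _).intervalIntegrable _ _)
      ((by fun_prop : Continuous _).intervalIntegrable _ _),
    hsq.intervalIntegral_comp_const_sub_eq, hsq.intervalIntegral_comp_const_add_eq, two_mul]

noncomputable def sineWave (L ε s : ℝ) : ℝ := ε * sin (2 * π * s / L)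

section sineWave

variable {L : ℝ} (ε : ℝ)

theorem periodic_sineWave (hL : L ≠ 0) : Periodic (sineWave L ε) L := by
  intro s
  rw [sineWave, sineWave, show 2 * π * (s + L) / L = 2 * π * s / L + 2 * π by field_simp,
    sin_add_two_pi]

theorem continuous_sineWave : Continuous (sineWave L ε) := by
  unfold sineWave; fun_prop

theorem integral_sineWave (hL : L ≠ 0) : ∫ s in 0..L, sineWave L ε s = 0 := by
  have hc : 2 * π / L ≠ 0 := div_ne_zero (by positivity) hL
  simp only [sineWave, mul_div_right_comm (2 * π)]
  rw [intervalIntegral.integral_const_mul, intervalIntegral.integral_comp_mul_left sin hc,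
    integral_sin, mul_zero, div_mul_cancel₀ _ hL, cos_two_pi, cos_zero, sub_self, smul_zero,
    mul_zero]

theorem integral_sineWave_sq (hL : L ≠ 0) : ∫ s in 0..L, sineWave L ε s ^ 2 = ε ^ 2 * L / 2 := by
  have hc : 2 * π / L ≠ 0 := div_ne_zero (by positivity) hL
  simp only [sineWave, mul_div_right_comm (2 * π), mul_pow]
  rw [intervalIntegral.integral_const_mul,
    intervalIntegral.integral_comp_mul_left (fun x => sin x ^ 2) hc, integral_sin_sq,
    div_mul_cancel₀ _ hL]
  simp only [mul_zero, sin_zero, sin_two_pi, zero_mul, sub_zero, smul_eq_mul]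
  field_simp
  ring

end sineWave

/-- the travelling waves `u₁ = ε sin(2π(t−x)/L)`, `u₂ = ε sin(2π(t+x)/L)`
are classical solutions of the open-loop example system with vanishing nonlocal source
terms and the open-loop boundary conditions, their `L²` norm is constant (`= ε²L`) and
nonzero, hence the null steady state of the open-loop system is not asymptotically
stable. -/
theorem stmt_10 (L c ε : ℝ) (hL : 0 < L) (hε : 0 < ε) :
    let u₁ : ℝ → ℝ → ℝ := fun t x => ε * Real.sin (2 * Real.pi * (t - x) / L)
    let u₂ : ℝ → ℝ → ℝ := fun t x => ε * Real.sin (2 * Real.pi * (t + x) / L)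
    (∀ x, Differentiable ℝ fun t => u₁ t x) ∧
    (∀ t, Differentiable ℝ fun x => u₁ t x) ∧
    (∀ x, Differentiable ℝ fun t => u₂ t x) ∧
    (∀ t, Differentiable ℝ fun x => u₂ t x) ∧
    (∀ t x : ℝ, deriv (fun s => u₁ s x) t + deriv (fun y => u₁ t y) x
        = c / L * Real.sin (∫ y in Ioo 0 L, u₂ t y)) ∧
    (∀ t x : ℝ, deriv (fun s => u₂ s x) t - deriv (fun y => u₂ t y) x
        = c / L * Real.sin (∫ y in Ioo 0 L, u₁ t y)) ∧
    (∀ t : ℝ, u₁ t 0 - u₂ t 0 = 0) ∧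
    (∀ t : ℝ, u₁ t L - u₂ t L = 0) ∧
    (∀ t : ℝ, (∫ y in Ioo 0 L, u₁ t y) = 0) ∧
    (∀ t : ℝ, (∫ y in Ioo 0 L, u₂ t y) = 0) ∧
    (∀ t : ℝ, (∫ x in Ioo 0 L, ((u₁ t x) ^ 2 + (u₂ t x) ^ 2)) = ε ^ 2 * L) ∧
    ¬ Filter.Tendsto (fun t => ∫ x in Ioo 0 L, ((u₁ t x) ^ 2 + (u₂ t x) ^ 2))
        Filter.atTop (nhds 0) := by
  intro u₁ u₂
  have hf := periodic_sineWave ε hL.ne'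
  have hmean₁ (t : ℝ) : ∫ y in Ioo 0 L, u₁ t y = 0 := by
    rw [← integral_Ioc_eq_integral_Ioo, ← intervalIntegral.integral_of_le hL.le]
    exact (hf.intervalIntegral_comp_const_sub_eq t).trans (integral_sineWave ε hL.ne')
  have hmean₂ (t : ℝ) : ∫ y in Ioo 0 L, u₂ t y = 0 := by
    rw [← integral_Ioc_eq_integral_Ioo, ← intervalIntegral.integral_of_le hL.le]
    exact (hf.intervalIntegral_comp_const_add_eq t).trans (integral_sineWave ε hL.ne')
  have henergy (t : ℝ) : ∫ x in Ioo 0 L, (u₁ t x ^ 2 + u₂ t x ^ 2) = ε ^ 2 * L := by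
    refine (integral_Ioo_comp_const_sub_sq_add_comp_const_add_sq hf (continuous_sineWave ε)
      hL.le t).trans ?_
    rw [integral_sineWave_sq ε hL.ne']
    ring
  refine ⟨fun x => by fun_prop, fun t => by fun_prop, fun x => by fun_prop, fun t => by fun_prop,
    fun t x => ?_, fun t x => ?_, fun t => by simp [u₁, u₂], fun t => ?_, hmean₁, hmean₂,
    henergy, ?_⟩
  · rw [hmean₂, sin_zero, mul_zero]
    exact deriv_comp_sub_const_add_deriv_comp_const_sub (sineWave L ε) t x
  · rw [hmean₁, sin_zero, mul_zero]
    exact deriv_comp_add_const_sub_deriv_comp_const_add (sineWave L ε) t x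
  · exact sub_eq_zero.2 ((hf.sub_eq t).trans (hf t).symm)
  · simp only [henergy, tendsto_const_nhds_iff]
    positivity
end

section
/- Let n ≥ 1, let a, b, Y, v, d ∈ ℝⁿ with b_i ≥ 0 and Y_i ≥ 0 for all i, let K be a real n×n matrix such that |v_i| ≤ ∑_{j=1}^n K_{ij} Y_j for every i, and let ε > 0. If the matrix diag(a) − (1+ε) Kᵀ diag(b) K is positive semidefinite, then ∑_{i=1}^n a_i Y_i² − ∑_{i=1}^n b_i (v_i + d_i)² ≥ −(1 + ε⁻¹) ∑_{i=1}^n b_i d_i². -/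
/-!
Testing the positive semidefinite matrix on `Y` gives `(1 + ε) ∑ bᵢ (KY)ᵢ² ≤ ∑ aᵢ Yᵢ²`.
Termwise, `|vᵢ| ≤ (KY)ᵢ` and Young's inequality give
`bᵢ (vᵢ + dᵢ)² ≤ (1 + ε) bᵢ (KY)ᵢ² + (1 + ε⁻¹) bᵢ dᵢ²`; summing and combining the two proves the claim.
-/

open Matrix

lemma add_sq_le_one_add_mul_sq_add_one_add_inv_mul_sq {ε : ℝ} (hε : 0 < ε) (x y : ℝ) :
    (x + y) ^ 2 ≤ (1 + ε) * x ^ 2 + (1 + ε⁻¹) * y ^ 2 := by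
  have key : 0 ≤ ε * ((1 + ε) * x ^ 2 + (1 + ε⁻¹) * y ^ 2 - (x + y) ^ 2) := by
    have : ε * ((1 + ε) * x ^ 2 + (1 + ε⁻¹) * y ^ 2 - (x + y) ^ 2) = (ε * x - y) ^ 2 := by
      field_simp
      ring
    rw [this]
    positivity
  exact sub_nonneg.mp ((mul_nonneg_iff_of_pos_left hε).mp key)

section QuadraticForms

variable {R ι : Type*} [CommSemiring R] [Fintype ι] [DecidableEq ι]

lemma dotProduct_diagonal_mulVec (a x : ι → R) :
    x ⬝ᵥ (diagonal a *ᵥ x) = ∑ i, a i * x i ^ 2 := by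
  simp only [mulVec_diagonal, dotProduct]
  exact Finset.sum_congr rfl fun i _ => by ring

lemma dotProduct_transpose_mul_diagonal_mul_mulVec (K : Matrix ι ι R) (b x : ι → R) :
    x ⬝ᵥ ((Kᵀ * diagonal b * K) *ᵥ x) = ∑ i, b i * (K *ᵥ x) i ^ 2 := by
  rw [← mulVec_mulVec, ← mulVec_mulVec, dotProduct_mulVec, vecMul_transpose,
    dotProduct_diagonal_mulVec]

end QuadraticForms

lemma Matrix.PosSemidef.smul_sum_mul_mulVec_sq_le {ι : Type*} [Fintype ι] [DecidableEq ι]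
    {a b : ι → ℝ} {K : Matrix ι ι ℝ} {c : ℝ} (h : (diagonal a - c • (Kᵀ * diagonal b * K)).PosSemidef)
    (x : ι → ℝ) :
    c * ∑ i, b i * (K *ᵥ x) i ^ 2 ≤ ∑ i, a i * x i ^ 2 := by
  have hx := h.dotProduct_mulVec_nonneg x
  rw [star_trivial, sub_mulVec, smul_mulVec, dotProduct_sub, dotProduct_smul,
    dotProduct_diagonal_mulVec, dotProduct_transpose_mul_diagonal_mul_mulVec, smul_eq_mul] at hx
  linarith

lemma mul_add_sq_le_of_abs_le {ε b v s d : ℝ} (hε : 0 < ε) (hb : 0 ≤ b) (hv : |v| ≤ s) :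
    b * (v + d) ^ 2 ≤ (1 + ε) * (b * s ^ 2) + (1 + ε⁻¹) * (b * d ^ 2) := by
  have hvs : v ^ 2 ≤ s ^ 2 := sq_le_sq' (abs_le.mp hv).1 (abs_le.mp hv).2
  have hyoung := add_sq_le_one_add_mul_sq_add_one_add_inv_mul_sq hε v d
  calc b * (v + d) ^ 2 ≤ b * ((1 + ε) * v ^ 2 + (1 + ε⁻¹) * d ^ 2) :=
        mul_le_mul_of_nonneg_left hyoung hb
    _ ≤ b * ((1 + ε) * s ^ 2 + (1 + ε⁻¹) * d ^ 2) := by gcongr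
    _ = (1 + ε) * (b * s ^ 2) + (1 + ε⁻¹) * (b * d ^ 2) := by ring

theorem stmt_11_general (n : ℕ) (a b Y v d : Fin n → ℝ)
    (hb : ∀ i, 0 ≤ b i)
    (K : Matrix (Fin n) (Fin n) ℝ)
    (hv : ∀ i, |v i| ≤ ∑ j, K i j * Y j)
    (ε : ℝ) (hε : 0 < ε)
    (hN : (Matrix.diagonal a - (1 + ε) • (Kᵀ * Matrix.diagonal b * K)).PosSemidef) :
    ∑ i, a i * (Y i) ^ 2 - ∑ i, b i * (v i + d i) ^ 2
      ≥ -(1 + ε⁻¹) * ∑ i, b i * (d i) ^ 2 := by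
  have hquad := hN.smul_sum_mul_mulVec_sq_le Y
  have hsum : ∑ i, b i * (v i + d i) ^ 2
      ≤ (1 + ε) * ∑ i, b i * (K *ᵥ Y) i ^ 2 + (1 + ε⁻¹) * ∑ i, b i * d i ^ 2 := by
    rw [Finset.mul_sum, Finset.mul_sum, ← Finset.sum_add_distrib]
    exact Finset.sum_le_sum fun i _ => mul_add_sq_le_of_abs_le hε (hb i) (hv i)
  linarith

/-- disturbed boundary-term estimate used in the ISS proof:
if `|v i| ≤ ∑ j, K i j * Y j` with `b, Y ≥ 0`, `ε > 0`, and
`diag(a) − (1+ε)Kᵀdiag(b)K` is positive semidefinite, then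
`∑ a_i Y_i² − ∑ b_i (v_i + d_i)² ≥ −(1+ε⁻¹) ∑ b_i d_i²`. -/
theorem stmt_11 (n : ℕ) (hn : 1 ≤ n) (a b Y v d : Fin n → ℝ)
    (hb : ∀ i, 0 ≤ b i) (hY : ∀ i, 0 ≤ Y i)
    (K : Matrix (Fin n) (Fin n) ℝ)
    (hv : ∀ i, |v i| ≤ ∑ j, K i j * Y j)
    (ε : ℝ) (hε : 0 < ε)
    (hN : (Matrix.diagonal a - (1 + ε) • (Kᵀ * Matrix.diagonal b * K)).PosSemidef) :
    ∑ i, a i * (Y i) ^ 2 - ∑ i, b i * (v i + d i) ^ 2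
      ≥ -(1 + ε⁻¹) * ∑ i, b i * (d i) ^ 2 :=
  stmt_11_general n a b Y v d hb K hv ε hε hN
end

section
/- Let L > 0, c ∈ ℝ, ε > 0 and k ∈ ℝ satisfy |c| < 1/(2(ε + 2L)) and (1 − k)² ≤ ε/(ε + 2L). Then there exist C > 0 and γ > 0, depending only on L, c, ε, k, such that for every T > 0, every continuously differentiable u = (u₁,u₂) : [0,T]×[0,L] → ℝ² satisfying ∂_t u₁(t,x) + ∂_x u₁(t,x) = (c/L)·sin(∫₀ᴸ u₂(t,y) dy), ∂_t u₂(t,x) − ∂_x u₂(t,x) = (c/L)·sin(∫₀ᴸ u₁(t,y) dy) for all (t,x) ∈ [0,T]×[0,L], together with the boundary conditions u₁(t,0) = u₂(t,0) and u₂(t,L) = (1 − k)u₁(t,L), satisfies ‖u(t,·)‖_{L²(0,L)} ≤ C e^{−γ t}‖u(0,·)‖_{L²(0,L)} for all t ∈ [0,T]. -/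
open MeasureTheory Set

/-- Cauchy–Schwarz on `Ioo 0 L`: `(∫|f|)² ≤ L·∫f²`. -/
lemma cs_aux {L : ℝ} (hL : 0 < L) {f : ℝ → ℝ}
    (hf : IntegrableOn f (Ioo 0 L)) (hf2 : IntegrableOn (fun x => f x ^ 2) (Ioo 0 L)) :
    (∫ x in Ioo 0 L, |f x|) ^ 2 ≤ L * ∫ x in Ioo 0 L, f x ^ 2 := by
  set N : ℝ := ∫ x in Ioo 0 L, f x ^ 2 with hN
  set A : ℝ := ∫ x in Ioo 0 L, |f x| with hA
  have hNn : 0 ≤ N := setIntegral_nonneg measurableSet_Ioo fun x _ => sq_nonneg _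
  have hAn : 0 ≤ A := setIntegral_nonneg measurableSet_Ioo fun x _ => abs_nonneg _
  have hvol : volume (Ioo (0:ℝ) L) < ⊤ := by simp [Real.volume_Ioo]
  have key : ∀ r : ℝ, 0 < r → A ≤ (r * L + N / r) / 2 := by
    intro r hr
    have hpt : ∀ x ∈ Ioo (0:ℝ) L, |f x| ≤ (r + f x ^ 2 / r) / 2 := by
      intro x _
      have h2r : |f x| * (2 * r) ≤ r ^ 2 + f x ^ 2 := by
        nlinarith [sq_nonneg (r - |f x|), sq_abs (f x)]
      have : |f x| = |f x| * (2 * r) / (2 * r) := by field_simp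
      rw [this]
      calc |f x| * (2 * r) / (2 * r) ≤ (r ^ 2 + f x ^ 2) / (2 * r) := by
            apply div_le_div_of_nonneg_right h2r (by positivity) |>.trans_eq rfl
        _ = (r + f x ^ 2 / r) / 2 := by field_simp
    have hint : IntegrableOn (fun x => (r + f x ^ 2 / r) / 2) (Ioo 0 L) :=
      ((integrableOn_const (C := r) hvol.ne).add (hf2.div_const r)).div_const 2
    calc A ≤ ∫ x in Ioo 0 L, (r + f x ^ 2 / r) / 2 :=
          setIntegral_mono_on hf.abs hint measurableSet_Ioo hpt
      _ = (r * L + N / r) / 2 := by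
          rw [integral_div, integral_add (integrableOn_const (C := r) hvol.ne)
            (hf2.div_const r), integral_div, setIntegral_const, hN]
          simp [Real.volume_Ioo, ENNReal.toReal_ofReal hL.le, smul_eq_mul, max_eq_left hL.le]
          ring
  rcases eq_or_lt_of_le hNn with hN0 | hN0
  · have hA0 : A ≤ 0 := by
      by_contra h
      push_neg at h
      have := key (A / L) (by positivity)
      rw [← hN0] at this
      have : A ≤ A / L * L / 2 := by simpa using this
      rw [div_mul_cancel₀ _ hL.ne'] at this
      linarith
    nlinarith
  · set r := Real.sqrt (N / L) with hr
    have hrpos : 0 < r := Real.sqrt_pos.2 (by positivity)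
    have hr2 : r ^ 2 = N / L := Real.sq_sqrt (by positivity)
    have hNe : N = r ^ 2 * L := by rw [hr2]; field_simp
    have hNr : N / r = r * L := by rw [hNe]; field_simp
    have hAr : A ≤ r * L := by
      have := key r hrpos
      rw [hNr] at this
      linarith
    calc A ^ 2 ≤ (r * L) ^ 2 := by nlinarith
      _ = L * N := by rw [hNe]; ring

set_option maxHeartbeats 1600000 in
/-- application of the main theorem to the closed-loop example system:
if `|c| < 1/(2(ε + 2L))` and `(1−k)² ≤ ε/(ε+2L)`, then every classical solution of
`∂ₜu₁ + ∂ₓu₁ = (c/L)sin∫₀ᴸu₂`, `∂ₜu₂ − ∂ₓu₂ = (c/L)sin∫₀ᴸu₁` with boundary conditions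
`u₁(t,0) = u₂(t,0)`, `u₂(t,L) = (1−k)u₁(t,L)` decays exponentially in the `L²` norm,
with constants depending only on `L, c, ε, k`. -/
theorem stmt_12 (L c ε k : ℝ) (hL : 0 < L) (hε : 0 < ε)
    (hc : |c| < 1 / (2 * (ε + 2 * L)))
    (hk : (1 - k) ^ 2 ≤ ε / (ε + 2 * L)) :
    ∃ C > (0:ℝ), ∃ γ > (0:ℝ), ∀ T > (0:ℝ), ∀ u ut ux : ℝ → ℝ → Fin 2 → ℝ,
      (∀ i, ContinuousOn (fun p : ℝ × ℝ => u p.1 p.2 i) (Icc 0 T ×ˢ Icc 0 L)) →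
      (∀ i, ContinuousOn (fun p : ℝ × ℝ => ut p.1 p.2 i) (Icc 0 T ×ˢ Icc 0 L)) →
      (∀ i, ContinuousOn (fun p : ℝ × ℝ => ux p.1 p.2 i) (Icc 0 T ×ˢ Icc 0 L)) →
      (∀ i, ∀ t ∈ Icc (0:ℝ) T, ∀ x ∈ Icc (0:ℝ) L,
        HasDerivWithinAt (fun s => u s x i) (ut t x i) (Icc 0 T) t) →
      (∀ i, ∀ t ∈ Icc (0:ℝ) T, ∀ x ∈ Icc (0:ℝ) L,
        HasDerivWithinAt (fun y => u t y i) (ux t x i) (Icc 0 L) x) →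
      -- the closed-loop example system
      (∀ t ∈ Icc (0:ℝ) T, ∀ x ∈ Icc (0:ℝ) L,
        ut t x 0 + ux t x 0 = c / L * Real.sin (∫ y in Ioo 0 L, u t y 1) ∧
        ut t x 1 - ux t x 1 = c / L * Real.sin (∫ y in Ioo 0 L, u t y 0)) →
      -- boundary conditions
      (∀ t ∈ Icc (0:ℝ) T, u t 0 0 = u t 0 1 ∧ u t L 1 = (1 - k) * u t L 0) →
      ∀ t ∈ Icc (0:ℝ) T,
        Real.sqrt (∫ x in Ioo 0 L, ((u t x 0) ^ 2 + (u t x 1) ^ 2))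
          ≤ C * Real.exp (-γ * t)
            * Real.sqrt (∫ x in Ioo 0 L, ((u 0 x 0) ^ 2 + (u 0 x 1) ^ 2)) := by
  have hS : (0:ℝ) < ε + 2 * L := by linarith
  set S := ε + 2 * L with hSdef
  have hcS : 2 * |c| * S < 1 := by
    have := (lt_div_iff₀ (by positivity : (0:ℝ) < 2 * S)).mp hc
    linarith
  set δ := 1 - 2 * |c| * S with hδdef
  have hδ : 0 < δ := by rw [hδdef]; linarith
  set γ := δ / (2 * S) with hγdef
  have hγ : 0 < γ := by rw [hγdef]; positivity
  refine ⟨Real.sqrt (S / ε), Real.sqrt_pos.2 (by positivity), γ, hγ, ?_⟩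
  intro T hT u ut ux hu hut hux hdt hdx hpde hbc
  have hvol : volume (Ioo (0:ℝ) L) < ⊤ := by simp [Real.volume_Ioo]
  -- slice continuity
  have hslx : ∀ (v : ℝ → ℝ → Fin 2 → ℝ),
      (∀ i, ContinuousOn (fun p : ℝ × ℝ => v p.1 p.2 i) (Icc 0 T ×ˢ Icc 0 L)) →
      ∀ i, ∀ t ∈ Icc (0:ℝ) T, ContinuousOn (fun x => v t x i) (Icc 0 L) := by
    intro v hv i t ht
    exact (hv i).comp (Continuous.continuousOn (by fun_prop))
      (fun x hx => mk_mem_prod ht hx)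
  have hslt : ∀ i, ∀ x ∈ Icc (0:ℝ) L, ContinuousOn (fun s => u s x i) (Icc 0 T) := by
    intro i x hx
    exact (hu i).comp (Continuous.continuousOn (by fun_prop))
      (fun s hs => mk_mem_prod hs hx)
  -- uniform bound
  obtain ⟨M, hM0, hM⟩ : ∃ M : ℝ, 0 ≤ M ∧ ∀ i, ∀ t ∈ Icc (0:ℝ) T, ∀ x ∈ Icc (0:ℝ) L,
      |u t x i| ≤ M ∧ |ut t x i| ≤ M := by
    have hK : IsCompact (Icc (0:ℝ) T ×ˢ Icc (0:ℝ) L) := isCompact_Icc.prod isCompact_Icc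
    choose B hB using fun i => hK.exists_bound_of_continuousOn (hu i)
    choose B' hB' using fun i => hK.exists_bound_of_continuousOn (hut i)
    refine ⟨|B 0| + |B 1| + |B' 0| + |B' 1|, by positivity, ?_⟩
    intro i t ht x hx
    have h1 := hB i (t, x) (mk_mem_prod ht hx)
    have h2 := hB' i (t, x) (mk_mem_prod ht hx)
    rw [Real.norm_eq_abs] at h1 h2
    have hBi : B i ≤ |B 0| + |B 1| + |B' 0| + |B' 1| := by
      fin_cases i <;> simp only [Fin.mk_zero, Fin.mk_one] <;>
        nlinarith [le_abs_self (B 0), le_abs_self (B 1), abs_nonneg (B 0), abs_nonneg (B 1),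
          abs_nonneg (B' 0), abs_nonneg (B' 1)]
    have hB'i : B' i ≤ |B 0| + |B 1| + |B' 0| + |B' 1| := by
      fin_cases i <;> simp only [Fin.mk_zero, Fin.mk_one] <;>
        nlinarith [le_abs_self (B' 0), le_abs_self (B' 1), abs_nonneg (B 0), abs_nonneg (B 1),
          abs_nonneg (B' 0), abs_nonneg (B' 1)]
    exact ⟨h1.trans hBi, h2.trans hB'i⟩
  -- integrability helper
  have hIoo : ∀ {g : ℝ → ℝ}, ContinuousOn g (Icc 0 L) → IntegrableOn g (Ioo 0 L) :=
    fun hg => hg.integrableOn_Icc.mono_set Ioo_subset_Icc_self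
  -- weights
  set w1 : ℝ → ℝ := fun x => L + ε - x with hw1
  set w2 : ℝ → ℝ := fun x => L + ε + x with hw2
  have hcw1 : Continuous w1 := by rw [hw1]; fun_prop
  have hcw2 : Continuous w2 := by rw [hw2]; fun_prop
  have hw1b : ∀ x ∈ Icc (0:ℝ) L, ε ≤ w1 x ∧ w1 x ≤ S := by
    intro x hx
    constructor <;> simp only [hw1, hSdef] <;> [linarith [hx.2]; linarith [hx.1]]
  have hw2b : ∀ x ∈ Icc (0:ℝ) L, ε ≤ w2 x ∧ w2 x ≤ S := by
    intro x hx
    constructor <;> simp only [hw2, hSdef] <;> [linarith [hx.1]; linarith [hx.2]]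
  set Ff : ℝ → ℝ → ℝ := fun t x => w1 x * u t x 0 ^ 2 + w2 x * u t x 1 ^ 2 with hFf
  set Ff' : ℝ → ℝ → ℝ := fun t x =>
    2 * w1 x * u t x 0 * ut t x 0 + 2 * w2 x * u t x 1 * ut t x 1 with hFfd
  set V : ℝ → ℝ := fun t => ∫ x in Ioo 0 L, Ff t x with hV
  set Nf : ℝ → ℝ := fun t => ∫ x in Ioo 0 L, (u t x 0 ^ 2 + u t x 1 ^ 2) with hNf
  -- continuity of slices of Ff, Ff', integrand of Nf
  have hcF : ∀ t ∈ Icc (0:ℝ) T, ContinuousOn (fun x => Ff t x) (Icc 0 L) := by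
    intro t ht
    simp only [hFf]
    exact (hcw1.continuousOn.mul ((hslx u hu 0 t ht).pow 2)).add
      (hcw2.continuousOn.mul ((hslx u hu 1 t ht).pow 2))
  have hcF' : ∀ t ∈ Icc (0:ℝ) T, ContinuousOn (fun x => Ff' t x) (Icc 0 L) := by
    intro t ht
    simp only [hFfd]
    exact (((continuous_const.mul hcw1).continuousOn.mul (hslx u hu 0 t ht)).mul
        (hslx ut hut 0 t ht)).add
      (((continuous_const.mul hcw2).continuousOn.mul (hslx u hu 1 t ht)).mul
        (hslx ut hut 1 t ht))
  have hcN : ∀ t ∈ Icc (0:ℝ) T, ContinuousOn (fun x => u t x 0 ^ 2 + u t x 1 ^ 2) (Icc 0 L) :=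
    fun t ht => ((hslx u hu 0 t ht).pow 2).add ((hslx u hu 1 t ht).pow 2)
  have hNnonneg : ∀ t, 0 ≤ Nf t :=
    fun t => setIntegral_nonneg measurableSet_Ioo fun x _ => by positivity
  -- comparison between V and Nf
  have hVleSN : ∀ t ∈ Icc (0:ℝ) T, V t ≤ S * Nf t := by
    intro t ht
    rw [hV, hNf]
    simp only []
    rw [← integral_const_mul]
    apply setIntegral_mono_on (hIoo (hcF t ht)) ((hIoo (hcN t ht)).const_mul S)
      measurableSet_Ioo
    intro x hx
    have h1 := hw1b x (Ioo_subset_Icc_self hx)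
    have h2 := hw2b x (Ioo_subset_Icc_self hx)
    simp only [hFf]
    nlinarith [sq_nonneg (u t x 0), sq_nonneg (u t x 1)]
  have hεNleV : ∀ t ∈ Icc (0:ℝ) T, ε * Nf t ≤ V t := by
    intro t ht
    rw [hV, hNf]
    simp only []
    rw [← integral_const_mul]
    apply setIntegral_mono_on ((hIoo (hcN t ht)).const_mul ε) (hIoo (hcF t ht))
      measurableSet_Ioo
    intro x hx
    have h1 := hw1b x (Ioo_subset_Icc_self hx)
    have h2 := hw2b x (Ioo_subset_Icc_self hx)
    simp only [hFf]
    nlinarith [sq_nonneg (u t x 0), sq_nonneg (u t x 1)]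
  -- continuity of V
  have hVcont : ContinuousOn V (Icc 0 T) := by
    rw [hV]
    apply continuousOn_of_dominated (μ := volume.restrict (Ioo (0:ℝ) L)) (bound := fun _ => S * M ^ 2 + S * M ^ 2)
    · intro t ht
      exact ((hcF t ht).mono Ioo_subset_Icc_self).aestronglyMeasurable measurableSet_Ioo
    · intro t ht
      filter_upwards [ae_restrict_mem measurableSet_Ioo] with x hx
      have hx' := Ioo_subset_Icc_self hx
      have h1 := (hM 0 t ht x hx').1
      have h2 := (hM 1 t ht x hx').1
      have hwb1 := hw1b x hx'
      have hwb2 := hw2b x hx'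
      rw [Real.norm_eq_abs]
      have e1 : u t x 0 ^ 2 ≤ M ^ 2 := by nlinarith [abs_nonneg (u t x 0), sq_abs (u t x 0)]
      have e2 : u t x 1 ^ 2 ≤ M ^ 2 := by nlinarith [abs_nonneg (u t x 1), sq_abs (u t x 1)]
      have hFnn : 0 ≤ Ff t x := by
        simp only [hFf]; nlinarith [sq_nonneg (u t x 0), sq_nonneg (u t x 1)]
      rw [abs_of_nonneg hFnn]
      simp only [hFf]
      nlinarith [sq_nonneg (u t x 0), sq_nonneg (u t x 1)]
    · exact integrableOn_const (C := S * M ^ 2 + S * M ^ 2) hvol.ne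
    · filter_upwards [ae_restrict_mem measurableSet_Ioo] with x hx
      have hx' := Ioo_subset_Icc_self hx
      simp only [hFf]
      exact (continuousOn_const.mul ((hslt 0 x hx').pow 2)).add
        (continuousOn_const.mul ((hslt 1 x hx').pow 2))
  -- derivative of V in the interior
  have hVderiv : ∀ t₀ ∈ Ioo (0:ℝ) T, HasDerivAt V (∫ x in Ioo 0 L, Ff' t₀ x) t₀ := by
    intro t₀ ht₀
    have hrpos : 0 < min t₀ (T - t₀) := lt_min ht₀.1 (by linarith [ht₀.2])
    have hball : Metric.ball t₀ (min t₀ (T - t₀)) ⊆ Ioo 0 T := by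
      intro s hs
      rw [Real.ball_eq_Ioo] at hs
      constructor
      · have := min_le_left t₀ (T - t₀); linarith [hs.1]
      · have := min_le_right t₀ (T - t₀); linarith [hs.2]
    have key := hasDerivAt_integral_of_dominated_loc_of_deriv_le
      (μ := volume.restrict (Ioo (0:ℝ) L)) (F := Ff) (F' := Ff')
      (bound := fun _ => 2 * S * M ^ 2 + 2 * S * M ^ 2) (x₀ := t₀) (Metric.ball_mem_nhds t₀ hrpos) ?_ ?_ ?_ ?_ ?_ ?_
    · exact key.2
    · filter_upwards [Icc_mem_nhds ht₀.1 ht₀.2] with t ht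
      exact ((hcF t ht).mono Ioo_subset_Icc_self).aestronglyMeasurable measurableSet_Ioo
    · exact hIoo (hcF t₀ (Ioo_subset_Icc_self ht₀))
    · exact ((hcF' t₀ (Ioo_subset_Icc_self ht₀)).mono Ioo_subset_Icc_self).aestronglyMeasurable measurableSet_Ioo
    · filter_upwards [ae_restrict_mem measurableSet_Ioo] with x hx
      intro t htb
      have ht' := hball htb
      have ht'' := Ioo_subset_Icc_self ht'
      have hx' := Ioo_subset_Icc_self hx
      have h1 := (hM 0 t ht'' x hx').1
      have h2 := (hM 1 t ht'' x hx').1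
      have h3 := (hM 0 t ht'' x hx').2
      have h4 := (hM 1 t ht'' x hx').2
      have hwb1 := hw1b x hx'
      have hwb2 := hw2b x hx'
      rw [Real.norm_eq_abs]
      simp only [hFfd]
      calc |2 * w1 x * u t x 0 * ut t x 0 + 2 * w2 x * u t x 1 * ut t x 1|
          ≤ |2 * w1 x * u t x 0 * ut t x 0| + |2 * w2 x * u t x 1 * ut t x 1| := abs_add_le _ _
        _ ≤ 2 * S * M ^ 2 + 2 * S * M ^ 2 := by
            rw [abs_mul, abs_mul, abs_mul, abs_mul, abs_mul, abs_mul]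
            have hw1a : |w1 x| = w1 x := abs_of_nonneg (by linarith [hwb1.1])
            have hw2a : |w2 x| = w2 x := abs_of_nonneg (by linarith [hwb2.1])
            rw [hw1a, hw2a]
            have : |(2:ℝ)| = 2 := by norm_num
            rw [this]
            have b1 : w1 x * |u t x 0| ≤ S * M :=
              mul_le_mul hwb1.2 h1 (abs_nonneg _) hS.le
            have b2 : w2 x * |u t x 1| ≤ S * M :=
              mul_le_mul hwb2.2 h2 (abs_nonneg _) hS.le
            have b1' : w1 x * |u t x 0| * |ut t x 0| ≤ S * M * M :=
              mul_le_mul b1 h3 (abs_nonneg _) (mul_nonneg hS.le hM0)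
            have b2' : w2 x * |u t x 1| * |ut t x 1| ≤ S * M * M :=
              mul_le_mul b2 h4 (abs_nonneg _) (mul_nonneg hS.le hM0)
            nlinarith [b1', b2']
    · exact integrableOn_const (C := 2 * S * M ^ 2 + 2 * S * M ^ 2) hvol.ne
    · filter_upwards [ae_restrict_mem measurableSet_Ioo] with x hx
      intro t htb
      have ht' := hball htb
      have hx' := Ioo_subset_Icc_self hx
      have hd0 : HasDerivAt (fun s => u s x 0) (ut t x 0) t :=
        (hdt 0 t (Ioo_subset_Icc_self ht') x hx').hasDerivAt (Icc_mem_nhds ht'.1 ht'.2)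
      have hd1 : HasDerivAt (fun s => u s x 1) (ut t x 1) t :=
        (hdt 1 t (Ioo_subset_Icc_self ht') x hx').hasDerivAt (Icc_mem_nhds ht'.1 ht'.2)
      have H : HasDerivAt (fun s => w1 x * u s x 0 ^ 2 + w2 x * u s x 1 ^ 2)
          (w1 x * ((2:ℕ) * u t x 0 ^ 1 * ut t x 0) + w2 x * ((2:ℕ) * u t x 1 ^ 1 * ut t x 1)) t :=
        ((hd0.pow 2).const_mul (w1 x)).add ((hd1.pow 2).const_mul (w2 x))
      have heq : Ff' t x = w1 x * ((2:ℕ) * u t x 0 ^ 1 * ut t x 0)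
          + w2 x * ((2:ℕ) * u t x 1 ^ 1 * ut t x 1) := by
        simp only [hFfd]; push_cast; ring
      rw [hFf]
      simp only []
      rw [heq]
      exact H
  -- the key differential inequality
  have hEkey : ∀ t ∈ Icc (0:ℝ) T, (∫ x in Ioo 0 L, Ff' t x) ≤ -(2 * γ) * V t := by
    intro t ht
    set g1 := c / L * Real.sin (∫ y in Ioo 0 L, u t y 1) with hg1
    set g2 := c / L * Real.sin (∫ y in Ioo 0 L, u t y 0) with hg2
    set A1 := ∫ x in Ioo 0 L, |u t x 0| with hA1
    set A2 := ∫ x in Ioo 0 L, |u t x 1| with hA2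
    set N1 := ∫ x in Ioo 0 L, u t x 0 ^ 2 with hN1
    set N2 := ∫ x in Ioo 0 L, u t x 1 ^ 2 with hN2
    have cu0 := hslx u hu 0 t ht
    have cu1 := hslx u hu 1 t ht
    have cux0 := hslx ux hux 0 t ht
    have cux1 := hslx ux hux 1 t ht
    have hNsplit : Nf t = N1 + N2 := by
      rw [hNf, hN1, hN2]
      exact integral_add (hIoo (cu0.pow 2)) (hIoo (cu1.pow 2))
    have hN1n : 0 ≤ N1 := setIntegral_nonneg measurableSet_Ioo fun x _ => sq_nonneg _
    have hN2n : 0 ≤ N2 := setIntegral_nonneg measurableSet_Ioo fun x _ => sq_nonneg _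
    have hA1n : 0 ≤ A1 := setIntegral_nonneg measurableSet_Ioo fun x _ => abs_nonneg _
    have hA2n : 0 ≤ A2 := setIntegral_nonneg measurableSet_Ioo fun x _ => abs_nonneg _
    set Htr : ℝ → ℝ := fun x =>
      -(2 * w1 x * u t x 0 * ux t x 0) + 2 * w2 x * u t x 1 * ux t x 1 with hHtr
    set Hsr : ℝ → ℝ := fun x =>
      g1 * (2 * w1 x * u t x 0) + g2 * (2 * w2 x * u t x 1) with hHsr
    have cHtr : ContinuousOn Htr (Icc 0 L) := by
      simp only [hHtr]
      exact ((((continuous_const.mul hcw1).continuousOn.mul cu0).mul cux0).neg).add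
        (((continuous_const.mul hcw2).continuousOn.mul cu1).mul cux1)
    have cHsr : ContinuousOn Hsr (Icc 0 L) := by
      simp only [hHsr]
      exact (continuousOn_const.mul ((continuous_const.mul hcw1).continuousOn.mul cu0)).add
        (continuousOn_const.mul ((continuous_const.mul hcw2).continuousOn.mul cu1))
    have intHtr : IntegrableOn Htr (Ioo 0 L) := hIoo cHtr
    have intHsr : IntegrableOn Hsr (Ioo 0 L) := hIoo cHsr
    have hsplit : (∫ x in Ioo 0 L, Ff' t x)
        = (∫ x in Ioo 0 L, Htr x) + ∫ x in Ioo 0 L, Hsr x := by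
      rw [← integral_add intHtr intHsr]
      apply setIntegral_congr_fun measurableSet_Ioo
      intro x hx
      have hx' := Ioo_subset_Icc_self hx
      have h1 := (hpde t ht x hx').1
      have h2 := (hpde t ht x hx').2
      rw [← hg1] at h1
      rw [← hg2] at h2
      have e0 : ut t x 0 = g1 - ux t x 0 := by linarith
      have e1 : ut t x 1 = g2 + ux t x 1 := by linarith
      simp only [hFfd, hHtr, hHsr]
      rw [e0, e1]
      ring
    -- integration by parts for the transport term
    set φ : ℝ → ℝ := fun x => -(w1 x * u t x 0 ^ 2) + w2 x * u t x 1 ^ 2 with hφ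
    have hφcont : ContinuousOn φ (Icc 0 L) := by
      simp only [hφ]
      exact ((hcw1.continuousOn.mul (cu0.pow 2)).neg).add (hcw2.continuousOn.mul (cu1.pow 2))
    have hφderiv : ∀ x ∈ Ioo (0:ℝ) L,
        HasDerivWithinAt φ ((u t x 0 ^ 2 + u t x 1 ^ 2) + Htr x) (Ioi x) x := by
      intro x hx
      have hx' := Ioo_subset_Icc_self hx
      have hdu0 : HasDerivAt (fun y => u t y 0) (ux t x 0) x :=
        (hdx 0 t ht x hx').hasDerivAt (Icc_mem_nhds hx.1 hx.2)
      have hdu1 : HasDerivAt (fun y => u t y 1) (ux t x 1) x :=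
        (hdx 1 t ht x hx').hasDerivAt (Icc_mem_nhds hx.1 hx.2)
      have hw1d : HasDerivAt w1 (-1) x := by
        rw [hw1]; simpa using (hasDerivAt_id x).const_sub (L + ε)
      have hw2d : HasDerivAt w2 1 x := by
        rw [hw2]; simpa using (hasDerivAt_id x).const_add (L + ε)
      have H : HasDerivAt φ
          (-((-1) * u t x 0 ^ 2 + w1 x * ((2:ℕ) * u t x 0 ^ 1 * ux t x 0))
            + ((1:ℝ) * u t x 1 ^ 2 + w2 x * ((2:ℕ) * u t x 1 ^ 1 * ux t x 1))) x := by
        rw [hφ]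
        exact ((hw1d.mul (hdu0.pow 2)).neg).add (hw2d.mul (hdu1.pow 2))
      have heq : (u t x 0 ^ 2 + u t x 1 ^ 2) + Htr x
          = -((-1) * u t x 0 ^ 2 + w1 x * ((2:ℕ) * u t x 0 ^ 1 * ux t x 0))
            + ((1:ℝ) * u t x 1 ^ 2 + w2 x * ((2:ℕ) * u t x 1 ^ 1 * ux t x 1)) := by
        simp only [hHtr]; push_cast; ring
      rw [heq]
      exact H.hasDerivWithinAt
    have hintsum : IntervalIntegrable (fun x => (u t x 0 ^ 2 + u t x 1 ^ 2) + Htr x) volume 0 L := by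
      apply ContinuousOn.intervalIntegrable
      rw [uIcc_of_le hL.le]
      exact ((cu0.pow 2).add (cu1.pow 2)).add cHtr
    have hFTC := intervalIntegral.integral_eq_sub_of_hasDeriv_right_of_le hL.le hφcont
      hφderiv hintsum
    rw [intervalIntegral.integral_of_le hL.le, integral_Ioc_eq_integral_Ioo] at hFTC
    have hadd : (∫ x in Ioo 0 L, ((u t x 0 ^ 2 + u t x 1 ^ 2) + Htr x))
        = Nf t + ∫ x in Ioo 0 L, Htr x := by
      rw [hNf]
      exact integral_add (hIoo ((cu0.pow 2).add (cu1.pow 2))) intHtr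
    have hIHtr : (∫ x in Ioo 0 L, Htr x) = (φ L - φ 0) - Nf t := by
      rw [hadd] at hFTC; linarith
    -- boundary term
    have hbd : φ L - φ 0 ≤ 0 := by
      have hb := hbc t ht
      have h1 : φ L = (S * (1 - k) ^ 2 - ε) * u t L 0 ^ 2 := by
        simp only [hφ, hw1, hw2, hSdef]
        rw [hb.2]
        ring
      have h2 : φ 0 = 0 := by
        simp only [hφ, hw1, hw2]
        rw [← hb.1]
        ring
      have hkS : S * (1 - k) ^ 2 ≤ ε := by
        have := (le_div_iff₀ hS).mp hk
        linarith
      rw [h1, h2]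
      nlinarith [sq_nonneg (u t L 0)]
    -- source term
    have hIHsr : (∫ x in Ioo 0 L, Hsr x) ≤ 2 * |c| * S * (N1 + N2) := by
      have int1 : IntegrableOn (fun x => 2 * w1 x * u t x 0) (Ioo 0 L) :=
        hIoo ((continuous_const.mul hcw1).continuousOn.mul cu0)
      have int2 : IntegrableOn (fun x => 2 * w2 x * u t x 1) (Ioo 0 L) :=
        hIoo ((continuous_const.mul hcw2).continuousOn.mul cu1)
      have hIdecomp : (∫ x in Ioo 0 L, Hsr x)
          = g1 * (∫ x in Ioo 0 L, 2 * w1 x * u t x 0)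
            + g2 * (∫ x in Ioo 0 L, 2 * w2 x * u t x 1) := by
        rw [hHsr]
        rw [integral_add (int1.const_mul g1) (int2.const_mul g2),
          integral_const_mul, integral_const_mul]
      set I1 := ∫ x in Ioo 0 L, 2 * w1 x * u t x 0 with hI1d
      set I2 := ∫ x in Ioo 0 L, 2 * w2 x * u t x 1 with hI2d
      have hI1 : |I1| ≤ 2 * S * A1 := by
        rw [hI1d]
        calc |∫ x in Ioo 0 L, 2 * w1 x * u t x 0|
            ≤ ∫ x in Ioo 0 L, |2 * w1 x * u t x 0| := by
              simpa only [Real.norm_eq_abs] using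
                norm_integral_le_integral_norm (μ := volume.restrict (Ioo 0 L))
                  (fun x => 2 * w1 x * u t x 0)
          _ ≤ ∫ x in Ioo 0 L, 2 * S * |u t x 0| := by
              apply setIntegral_mono_on int1.abs ((hIoo cu0.abs).const_mul _)
                measurableSet_Ioo
              intro x hx
              have hwb := hw1b x (Ioo_subset_Icc_self hx)
              rw [abs_mul, abs_mul, abs_of_nonneg (by norm_num : (0:ℝ) ≤ 2),
                abs_of_nonneg (by linarith [hwb.1] : 0 ≤ w1 x)]
              nlinarith [abs_nonneg (u t x 0), hwb.1, hwb.2]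
          _ = 2 * S * A1 := by rw [hA1, integral_const_mul]
      have hI2 : |I2| ≤ 2 * S * A2 := by
        rw [hI2d]
        calc |∫ x in Ioo 0 L, 2 * w2 x * u t x 1|
            ≤ ∫ x in Ioo 0 L, |2 * w2 x * u t x 1| := by
              simpa only [Real.norm_eq_abs] using
                norm_integral_le_integral_norm (μ := volume.restrict (Ioo 0 L))
                  (fun x => 2 * w2 x * u t x 1)
          _ ≤ ∫ x in Ioo 0 L, 2 * S * |u t x 1| := by
              apply setIntegral_mono_on int2.abs ((hIoo cu1.abs).const_mul _)
                measurableSet_Ioo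
              intro x hx
              have hwb := hw2b x (Ioo_subset_Icc_self hx)
              rw [abs_mul, abs_mul, abs_of_nonneg (by norm_num : (0:ℝ) ≤ 2),
                abs_of_nonneg (by linarith [hwb.1] : 0 ≤ w2 x)]
              nlinarith [abs_nonneg (u t x 1), hwb.1, hwb.2]
          _ = 2 * S * A2 := by rw [hA2, integral_const_mul]
      have habs0 : |∫ y in Ioo 0 L, u t y 0| ≤ A1 := by
        rw [hA1]
        simpa [Real.norm_eq_abs] using
          norm_integral_le_integral_norm (μ := volume.restrict (Ioo 0 L)) (fun y => u t y 0)
      have habs1 : |∫ y in Ioo 0 L, u t y 1| ≤ A2 := by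
        rw [hA2]
        simpa [Real.norm_eq_abs] using
          norm_integral_le_integral_norm (μ := volume.restrict (Ioo 0 L)) (fun y => u t y 1)
      have hg1b : |g1| ≤ |c| / L * A2 := by
        rw [hg1, abs_mul, abs_div]
        rw [abs_of_pos hL]
        apply mul_le_mul_of_nonneg_left _ (by positivity)
        exact (Real.abs_sin_le_abs).trans habs1
      have hg2b : |g2| ≤ |c| / L * A1 := by
        rw [hg2, abs_mul, abs_div]
        rw [abs_of_pos hL]
        apply mul_le_mul_of_nonneg_left _ (by positivity)
        exact (Real.abs_sin_le_abs).trans habs0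
      have hcs1 : A1 ^ 2 ≤ L * N1 := by
        rw [hA1, hN1]
        exact cs_aux hL (hIoo cu0) (hIoo (cu0.pow 2))
      have hcs2 : A2 ^ 2 ≤ L * N2 := by
        rw [hA2, hN2]
        exact cs_aux hL (hIoo cu1) (hIoo (cu1.pow 2))
      have step1 : g1 * I1 + g2 * I2 ≤ |g1| * |I1| + |g2| * |I2| := by
        have := le_abs_self (g1 * I1)
        have := le_abs_self (g2 * I2)
        rw [← abs_mul, ← abs_mul]
        apply add_le_add (le_abs_self _) (le_abs_self _)
      have step2 : |g1| * |I1| + |g2| * |I2|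
          ≤ (|c| / L * A2) * (2 * S * A1) + (|c| / L * A1) * (2 * S * A2) := by
        apply add_le_add
        · exact mul_le_mul hg1b hI1 (abs_nonneg _) (by positivity)
        · exact mul_le_mul hg2b hI2 (abs_nonneg _) (by positivity)
      have h2A : 2 * (A1 * A2) ≤ L * (N1 + N2) := by
        nlinarith [sq_nonneg (A1 - A2)]
      have step3 : (|c| / L * A2) * (2 * S * A1) + (|c| / L * A1) * (2 * S * A2)
          ≤ 2 * |c| * S * (N1 + N2) := by
        have e1 : (|c| / L * A2) * (2 * S * A1) + (|c| / L * A1) * (2 * S * A2)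
            = (2 * S * |c| / L) * (2 * (A1 * A2)) := by ring
        have e2 : (2 * S * |c| / L) * (L * (N1 + N2)) = 2 * |c| * S * (N1 + N2) := by
          field_simp
        rw [e1, ← e2]
        apply mul_le_mul_of_nonneg_left h2A (by positivity)
      rw [hIdecomp]
      exact step1.trans (step2.trans step3)
    -- combine
    have hNV : V t ≤ S * Nf t := hVleSN t ht
    have hstep : (∫ x in Ioo 0 L, Ff' t x) ≤ -δ * Nf t := by
      rw [hsplit, hIHtr]
      have : -δ * Nf t = (0 : ℝ) - Nf t + 2 * |c| * S * (N1 + N2) := by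
        rw [hδdef, hNsplit]; ring
      rw [this]
      have := hIHsr
      linarith
    have h1 : V t / S ≤ Nf t := by
      rw [div_le_iff₀ hS]
      linarith
    have h2 : -δ * Nf t ≤ -δ * (V t / S) := by
      have := mul_le_mul_of_nonneg_left h1 hδ.le
      linarith
    have h3 : -δ * (V t / S) = -(2 * γ) * V t := by
      have hSne : S ≠ 0 := ne_of_gt hS
      rw [hγdef]
      field_simp
    exact hstep.trans (h2.trans h3.le)
  -- Gronwall via antitonicity
  set W : ℝ → ℝ := fun s => V s * Real.exp (2 * γ * s) with hW
  have hWcont : ContinuousOn W (Icc 0 T) := by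
    rw [hW]
    exact hVcont.mul (Real.continuous_exp.comp (by fun_prop)).continuousOn
  have hWderiv : ∀ s ∈ Ioo (0:ℝ) T, HasDerivAt W
      ((∫ x in Ioo 0 L, Ff' s x) * Real.exp (2 * γ * s)
        + V s * (Real.exp (2 * γ * s) * (2 * γ))) s := by
    intro s hs
    have hlin : HasDerivAt (fun s : ℝ => 2 * γ * s) (2 * γ) s := by
      simpa using (hasDerivAt_id s).const_mul (2 * γ)
    rw [hW]
    exact (hVderiv s hs).mul hlin.exp
  have hanti : AntitoneOn W (Icc 0 T) := by
    apply antitoneOn_of_deriv_nonpos (convex_Icc 0 T) hWcont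
    · intro s hs
      rw [interior_Icc] at hs
      exact (hWderiv s hs).differentiableAt.differentiableWithinAt
    · intro s hs
      rw [interior_Icc] at hs
      rw [(hWderiv s hs).deriv]
      have h1 := hEkey s (Ioo_subset_Icc_self hs)
      have h2 : (0:ℝ) < Real.exp (2 * γ * s) := Real.exp_pos _
      have h3 : (∫ x in Ioo 0 L, Ff' s x) + 2 * γ * V s ≤ 0 := by linarith
      have h4 : (∫ x in Ioo 0 L, Ff' s x) * Real.exp (2 * γ * s)
          + V s * (Real.exp (2 * γ * s) * (2 * γ))
          = ((∫ x in Ioo 0 L, Ff' s x) + 2 * γ * V s) * Real.exp (2 * γ * s) := by ring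
      rw [h4]
      exact mul_nonpos_of_nonpos_of_nonneg h3 h2.le
  -- conclusion
  intro t ht
  set q := Real.exp (-γ * t) with hq
  have hqpos : 0 < q := Real.exp_pos _
  have hWle : W t ≤ W 0 := hanti (left_mem_Icc.2 hT.le) ht ht.1
  have hW0 : W 0 = V 0 := by rw [hW]; simp
  have hWt : V t * Real.exp (2 * γ * t) ≤ V 0 := by
    rw [← hW0]
    simpa [hW] using hWle
  have hqq : q ^ 2 * Real.exp (2 * γ * t) = 1 := by
    rw [hq, sq, ← Real.exp_add, ← Real.exp_add,
      show -γ * t + -γ * t + 2 * γ * t = 0 by ring, Real.exp_zero]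
  have hVt : V t ≤ V 0 * q ^ 2 := by
    have h4 := mul_le_mul_of_nonneg_right hWt (sq_nonneg q)
    have h5 : V t * Real.exp (2 * γ * t) * q ^ 2 = V t := by
      rw [mul_assoc, mul_comm (Real.exp (2 * γ * t)) (q ^ 2), hqq, mul_one]
    rw [h5] at h4
    exact h4
  have hfinal : Nf t ≤ S / ε * q ^ 2 * Nf 0 := by
    have h1 : ε * Nf t ≤ V t := hεNleV t ht
    have h2 : V 0 ≤ S * Nf 0 := hVleSN 0 (left_mem_Icc.2 hT.le)
    have h3 : V 0 * q ^ 2 ≤ S * Nf 0 * q ^ 2 :=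
      mul_le_mul_of_nonneg_right h2 (sq_nonneg q)
    rw [div_mul_eq_mul_div, div_mul_eq_mul_div, le_div_iff₀ hε]
    nlinarith
  have hcalc : Real.sqrt (Nf t) ≤ Real.sqrt (S / ε) * q * Real.sqrt (Nf 0) := by
    calc Real.sqrt (Nf t) ≤ Real.sqrt (S / ε * q ^ 2 * Nf 0) := Real.sqrt_le_sqrt hfinal
      _ = Real.sqrt (S / ε) * q * Real.sqrt (Nf 0) := by
          rw [Real.sqrt_mul (by positivity : (0:ℝ) ≤ S / ε * q ^ 2),
            Real.sqrt_mul (by positivity : (0:ℝ) ≤ S / ε),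
            Real.sqrt_sq hqpos.le]
  simpa only [hNf, hq] using hcalc
end
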